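/- arXiv:2207.09311 — 6 statements merged into one kernel-verified Lean document; each statement's English description precedes it below -/
import Mathlib

section
/- Let X : Fin n × Fin n → ℝ be i.i.d. random variables with mean m₁ = E[X_{ij}] and second moment m₂ = E[X_{ij}²], on a probability space. Then the expected square of the determinant of the matrix A = (X_{ij}) equals n! · (m₂ + m₁²(n-1)) · (m₂ - m₁²)^{n-1}. -/
/-!
Expanding `det A ^ 2` by the Leibniz formula gives a double sum over permutations `σ, τ` of
`sign σ * sign τ * ∏ i, X (σ i, i) * X (τ i, i)`. In this product every entry occurs to the power
0, 1 or 2, so by independence its expectation factors over the columns: column `i` contributes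
`m₂` if `σ i = τ i` and `m₁ ^ 2` otherwise, i.e. `C (σ i) (τ i)` for the matrix `C` with `m₂` on
the diagonal and `m₁ ^ 2` off it. Summing over `σ` for fixed `τ` gives `sign τ * det C`, so
`E[det A ^ 2] = n! * det C`, and `det C` follows from the matrix determinant lemma since `C` is a
multiple of the identity plus a rank-one matrix.
-/

open MeasureTheory ProbabilityTheory Nat

section GraphMultiplicity

variable {ι : Type*} [DecidableEq ι]

def graphMultiplicity (σ τ : ι → ι) (p : ι × ι) : ℕ :=
  (if p.1 = σ p.2 then 1 else 0) + (if p.1 = τ p.2 then 1 else 0)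

theorem graphMultiplicity_le_two (σ τ : ι → ι) (p : ι × ι) : graphMultiplicity σ τ p ≤ 2 := by
  unfold graphMultiplicity
  split_ifs <;> simp

variable [Fintype ι] {M : Type*} [CommMonoid M]

theorem prod_pow_ite_eq_apply (σ : ι → ι) (x : ι × ι → M) :
    ∏ p : ι × ι, x p ^ (if p.1 = σ p.2 then 1 else 0) = ∏ i, x (σ i, i) := by
  rw [Fintype.prod_prod_type_right]
  refine Finset.prod_congr rfl fun i _ => ?_
  simp only [pow_ite, pow_one, pow_zero]
  exact Finset.prod_ite_eq' _ _ _ |>.trans (if_pos (Finset.mem_univ _))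

theorem prod_mul_prod_eq_prod_pow_graphMultiplicity (σ τ : ι → ι) (x : ι × ι → M) :
    ∏ i, x (σ i, i) * x (τ i, i) = ∏ p : ι × ι, x p ^ graphMultiplicity σ τ p := by
  simp only [graphMultiplicity, pow_add, Finset.prod_mul_distrib, prod_pow_ite_eq_apply]

theorem prod_apply_graphMultiplicity (σ τ : ι → ι) (g : ℕ → M) (hg : g 0 = 1) (i : ι) :
    ∏ j, g (graphMultiplicity σ τ (j, i)) = if σ i = τ i then g 2 else g 1 * g 1 := by
  unfold graphMultiplicity
  split_ifs with h
  · simp only [h, ← two_mul, mul_ite, mul_one, mul_zero]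
    rw [Finset.prod_eq_single (τ i) (fun j _ hj => by simp [hj, hg]) (by simp)]
    simp
  · rw [Finset.prod_eq_mul (σ i) (τ i) h (fun j _ hj => by simp [hj.1, hj.2, hg])
      (by simp) (by simp)]
    simp [h, Ne.symm h]

end GraphMultiplicity

section Moments

variable {α 𝕜 : Type*} [MeasurableSpace α] {μ : Measure α} [RCLike 𝕜]

theorem MeasureTheory.Integrable.pow_of_le [IsFiniteMeasure μ] {f : α → 𝕜}
    (hf : AEStronglyMeasurable f μ) {k m : ℕ} (hkm : k ≤ m)
    (h : Integrable (fun x => f x ^ m) μ) : Integrable (fun x => f x ^ k) μ := by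
  refine (integrable_norm_iff (hf.pow k)).1 ?_
  simp only [Pi.pow_apply, norm_pow]
  exact integrable_norm_pow_of_le hf hkm (by simpa only [norm_pow] using h.norm)

theorem ProbabilityTheory.iIndepFun.integrable_fun_prod {ι : Type*} [Fintype ι]
    {X : ι → α → 𝕜} (hX : iIndepFun X μ) (mX : ∀ i, AEMeasurable (X i) μ)
    (hint : ∀ i, Integrable (X i) μ) : Integrable (fun ω => ∏ i, X i ω) μ := by
  have : Integrable (fun x : ι → 𝕜 => ∏ i, x i) (μ.map fun ω i => X i ω) := by
    rw [hX.map_fun_eq_pi_map mX]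
    have := hX.isProbabilityMeasure
    exact Integrable.fintype_prod (f := fun _ x => x) fun i =>
      (integrable_map_measure aestronglyMeasurable_id (mX i)).2 (hint i)
  exact this.comp_aemeasurable (by fun_prop)

end Moments

section IIDEntries

variable {Ω ι : Type*} [MeasurableSpace Ω] {μ : Measure Ω} [Fintype ι] [DecidableEq ι]
  {X : ι × ι → Ω → ℝ} {p₀ : ι × ι}

theorem integrable_prod_entry_mul_entry (hX : iIndepFun X μ) (hmeas : ∀ p, Measurable (X p))
    (hid : ∀ p, IdentDistrib (X p) (X p₀) μ μ) (hsq : Integrable (fun ω => X p₀ ω ^ 2) μ)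
    (σ τ : ι → ι) : Integrable (fun ω => ∏ i, X (σ i, i) ω * X (τ i, i) ω) μ := by
  have := hX.isProbabilityMeasure
  rw [funext fun ω => prod_mul_prod_eq_prod_pow_graphMultiplicity σ τ (X · ω)]
  refine (hX.comp (fun p x => x ^ graphMultiplicity σ τ p) fun p => by fun_prop).integrable_fun_prod
    (fun p => by fun_prop) fun p => ?_
  have hsq_p : Integrable (fun ω => X p ω ^ 2) μ :=
    ((hid p).comp (measurable_id.pow_const 2)).integrable_iff.2 hsq
  exact hsq_p.pow_of_le (hmeas p).aestronglyMeasurable (graphMultiplicity_le_two σ τ p)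

theorem integral_prod_entry_mul_entry (hX : iIndepFun X μ) (hmeas : ∀ p, Measurable (X p))
    (hid : ∀ p, IdentDistrib (X p) (X p₀) μ μ) (σ τ : ι → ι) :
    ∫ ω, ∏ i, X (σ i, i) ω * X (τ i, i) ω ∂μ =
      ∏ i, if σ i = τ i then ∫ ω, X p₀ ω ^ 2 ∂μ else (∫ ω, X p₀ ω ∂μ) ^ 2 := by
  have := hX.isProbabilityMeasure
  have hmoment : ∀ p k, ∫ ω, X p ω ^ k ∂μ = ∫ ω, X p₀ ω ^ k ∂μ := fun p k =>
    ((hid p).comp (measurable_id.pow_const k)).integral_eq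
  rw [funext fun ω => prod_mul_prod_eq_prod_pow_graphMultiplicity σ τ (X · ω),
    hX.integral_fun_prod_comp (f := fun p x => x ^ graphMultiplicity σ τ p)
    (fun p => (hmeas p).aemeasurable) (fun p => by fun_prop)]
  simp only [hmoment]
  rw [Fintype.prod_prod_type_right]
  refine Finset.prod_congr rfl fun i _ => ?_
  rw [prod_apply_graphMultiplicity σ τ (fun k => ∫ ω, X p₀ ω ^ k ∂μ) (by simp)]
  simp [sq]

end IIDEntries

namespace Matrix

open Equiv

variable {n R : Type*} [Fintype n] [DecidableEq n] [CommRing R]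

theorem det_sq_eq_sum_sum_sign_mul_prod (A : Matrix n n R) :
    A.det ^ 2 = ∑ σ : Perm n, ∑ τ : Perm n,
      ((Perm.sign σ : ℤ) : R) * ((Perm.sign τ : ℤ) : R) * ∏ i, A (σ i) i * A (τ i) i := by
  rw [det_apply', sq, Finset.sum_mul_sum]
  refine Finset.sum_congr rfl fun σ _ => Finset.sum_congr rfl fun τ _ => ?_
  rw [Finset.prod_mul_distrib]
  ring

theorem sum_sum_sign_mul_prod_eq_factorial_mul_det (C : Matrix n n R) :
    ∑ σ : Perm n, ∑ τ : Perm n,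
      ((Perm.sign σ : ℤ) : R) * ((Perm.sign τ : ℤ) : R) * ∏ i, C (σ i) (τ i) =
      (Fintype.card n)! * C.det := by
  have hrow : ∀ τ : Perm n, ∑ σ : Perm n, ((Perm.sign σ : ℤ) : R) * ∏ i, C (σ i) (τ i) =
      ((Perm.sign τ : ℤ) : R) * C.det := fun τ => by
    rw [← det_permute', det_apply']
    rfl
  calc _ = ∑ τ : Perm n, ((Perm.sign τ : ℤ) : R) *
        ∑ σ : Perm n, ((Perm.sign σ : ℤ) : R) * ∏ i, C (σ i) (τ i) := by
        rw [Finset.sum_comm]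
        refine Finset.sum_congr rfl fun τ _ => ?_
        rw [Finset.mul_sum]
        exact Finset.sum_congr rfl fun σ _ => by ring
    _ = ∑ _τ : Perm n, C.det := by
        refine Finset.sum_congr rfl fun τ _ => ?_
        rw [hrow, ← mul_assoc, ← Int.cast_mul, ← Units.val_mul, Int.units_mul_self]
        simp
    _ = (Fintype.card n)! * C.det := by simp [Fintype.card_perm]

theorem det_of_ite_eq {K : Type*} [Field K] {m : ℕ} (hm : 1 ≤ m) (x y : K) :
    (of fun i j : Fin m => if i = j then x else y).det =
      (x + y * ((m : K) - 1)) * (x - y) ^ (m - 1) := by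
  rcases eq_or_ne x y with rfl | hxy
  · rcases Nat.lt_or_ge m 2 with h2 | h2
    · obtain rfl : m = 1 := by omega
      simp
    · have h01 : (⟨0, by omega⟩ : Fin m) ≠ ⟨1, by omega⟩ := by simp [Fin.ext_iff]
      rw [det_zero_of_row_eq h01 (by funext j; simp [ite_self]), sub_self,
        zero_pow (by omega), mul_zero]
  · have hne : x - y ≠ 0 := sub_ne_zero.mpr hxy
    have hrank_one : (of fun i j : Fin m => if i = j then x else y)
        = (x - y) • (1 + replicateCol (Fin 1) (fun _ => y / (x - y)) *
            replicateRow (Fin 1) (fun _ => (1 : K))) := by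
      ext i j
      simp only [of_apply, smul_apply, add_apply, one_apply, mul_apply, replicateCol_apply,
        replicateRow_apply, Finset.sum_const, Finset.card_univ, Fintype.card_fin, one_smul,
        smul_eq_mul, mul_one]
      split_ifs <;> field_simp <;> ring
    rw [hrank_one, det_smul, det_one_add_mul_comm, det_unique]
    simp only [replicateRow_mul_replicateCol_apply, add_apply, one_apply_eq, dotProduct,
      Finset.sum_const, Finset.card_univ, Fintype.card_fin, nsmul_eq_mul, one_mul]
    rw [← Nat.sub_add_cancel hm, pow_succ]
    field_simp
    push_cast
    ring

end Matrix

theorem expectation_det_sq_iid_general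
    {Ω : Type*} [MeasureSpace Ω]
    (n : ℕ) (hn : 1 ≤ n) (X : Fin n × Fin n → Ω → ℝ)
    (hmeas : ∀ p, Measurable (X p))
    (hindep : iIndepFun X ℙ)
    (p₀ : Fin n × Fin n)
    (hident : ∀ p, Measure.map (X p) ℙ = Measure.map (X p₀) ℙ)
    (hint : Integrable (fun ω => (X p₀ ω) ^ 2) ℙ)
    (m₁ m₂ : ℝ) (hm₁ : m₁ = ∫ ω, X p₀ ω) (hm₂ : m₂ = ∫ ω, (X p₀ ω) ^ 2) :
    (∫ ω, (Matrix.det (Matrix.of fun i j => X (i, j) ω)) ^ 2) =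
      (n ! : ℝ) * (m₂ + m₁ ^ 2 * ((n : ℝ) - 1)) * (m₂ - m₁ ^ 2) ^ (n - 1) := by
  have hid : ∀ p, IdentDistrib (X p) (X p₀) ℙ ℙ := fun p =>
    ⟨(hmeas p).aemeasurable, (hmeas p₀).aemeasurable, hident p⟩
  have hterm_int := integrable_prod_entry_mul_entry hindep hmeas hid hint
  simp_rw [Matrix.det_sq_eq_sum_sum_sign_mul_prod, Matrix.of_apply]
  rw [integral_finsetSum _ fun (σ : Equiv.Perm (Fin n)) _ => integrable_finsetSum _
    fun (τ : Equiv.Perm (Fin n)) _ => (hterm_int σ τ).const_mul _]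
  simp_rw [integral_finsetSum _ fun (τ : Equiv.Perm (Fin n)) _ => (hterm_int _ τ).const_mul _,
    integral_const_mul, integral_prod_entry_mul_entry hindep hmeas hid, ← hm₁, ← hm₂]
  have hsum := Matrix.sum_sum_sign_mul_prod_eq_factorial_mul_det
    (Matrix.of fun j k : Fin n => if j = k then m₂ else m₁ ^ 2)
  rwa [Matrix.det_of_ite_eq hn, Fintype.card_fin, ← mul_assoc] at hsum

/-- Fortet's formula: for an `n × n` random matrix with i.i.d. entries of mean
`m₁` and second moment `m₂`, `E[det A ²] = n! (m₂ + m₁²(n-1)) (m₂ - m₁²)^(n-1)`. -/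
theorem expectation_det_sq_iid
    {Ω : Type*} [MeasureSpace Ω] [IsProbabilityMeasure (ℙ : Measure Ω)]
    (n : ℕ) (hn : 1 ≤ n) (X : Fin n × Fin n → Ω → ℝ)
    (hmeas : ∀ p, Measurable (X p))
    (hindep : iIndepFun X ℙ)
    (p₀ : Fin n × Fin n)
    (hident : ∀ p, Measure.map (X p) ℙ = Measure.map (X p₀) ℙ)
    (hint : Integrable (fun ω => (X p₀ ω) ^ 2) ℙ)
    (m₁ m₂ : ℝ) (hm₁ : m₁ = ∫ ω, X p₀ ω) (hm₂ : m₂ = ∫ ω, (X p₀ ω) ^ 2) :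
    (∫ ω, (Matrix.det (Matrix.of fun i j => X (i, j) ω)) ^ 2) =
      (n ! : ℝ) * (m₂ + m₁ ^ 2 * ((n : ℝ) - 1)) * (m₂ - m₁ ^ 2) ^ (n - 1) :=
  expectation_det_sq_iid_general n hn X hmeas hindep p₀ hident hint m₁ m₂ hm₁ hm₂
end

section
/- Let X_{ij}, 1 ≤ i,j ≤ n, be i.i.d. centered random variables (E[X_{ij}] = 0) with finite third moment μ₃ = E[X_{ij}³], and let B = (X_{ij}). Let S = ∑_{i,j} (-1)^{i+j} det(B_{ij}), where B_{ij} is B with row i and column j deleted. Then E[det(B)³ · S] = n² · μ₃ · E[det(B')⁴], where B' is an (n-1)×(n-1) matrix with i.i.d. entries of the same distribution. -/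
/-!
Expand `det B` along row `i`: `det B = ∑ₖ ± X (i, k) · M i k`, where the minors `M i k` do not
involve row `i`. Hence `E[det B ^ 3 · M i j]` is a sum over `k₁ k₂ k₃` of
`E[X (i, k₁) X (i, k₂) X (i, k₃)] · E[M i k₁ · M i k₂ · M i k₃ · M i j]` (± signs). Centering kills
the row factor unless `k₁ = k₂ = k₃ = k`, where it is `μ₃`; and `E[M i k ^ 3 · M i j] = 0` for
`k ≠ j`, because `M i j` is linear in column `k` of `B`, which `M i k` does not involve. What
remains is `(-1) ^ (i + j) μ₃ E[M i j ^ 4]`, and `M i j` has the law of `det B'`. The cofactor signs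
cancel, leaving `(m + 1) ^ 2` equal terms.

Integrability comes from `L⁴`: a product of independent `L⁴` variables is in `L⁴`, hence so is
every determinant of distinct entries, and a product of four `L⁴` functions is integrable.
-/

open MeasureTheory ProbabilityTheory
open scoped ENNReal

section

variable {Ω ι : Type*} {mΩ : MeasurableSpace Ω} {μ : Measure Ω}

theorem ProbabilityTheory.IndepFun.memLp_mul {f g : Ω → ℝ} {p : ℝ≥0∞} (hfg : IndepFun f g μ)
    (hf : MemLp f p μ) (hg : MemLp g p μ) : MemLp (f * g) p μ := by
  rcases eq_or_ne p 0 with rfl | hp0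
  · exact memLp_zero_iff_aestronglyMeasurable.2 (hf.1.mul hg.1)
  rcases eq_or_ne p ∞ with rfl | hptop
  · exact hg.mul hf
  have hnorm : Measurable fun x : ℝ => ‖x‖ ^ p.toReal := measurable_norm.pow_const _
  rw [← integrable_norm_rpow_iff (hf.1.mul hg.1) hp0 hptop]
  simp only [Pi.mul_apply, norm_mul, Real.mul_rpow (norm_nonneg _) (norm_nonneg _)]
  exact (hfg.comp hnorm hnorm).integrable_mul (hf.integrable_norm_rpow hp0 hptop)
    (hg.integrable_norm_rpow hp0 hptop)

theorem integrable_mul_mul_mul_of_memLp_four {f g h k : Ω → ℝ} (hf : MemLp f 4 μ)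
    (hg : MemLp g 4 μ) (hh : MemLp h 4 μ) (hk : MemLp k 4 μ) :
    Integrable (fun ω => f ω * g ω * h ω * k ω) μ := by
  have : ENNReal.HolderTriple 4 4 2 := ⟨by
    rw [← ENNReal.add_halves (2 : ℝ≥0∞)⁻¹, ENNReal.div_eq_inv_mul,
      ← ENNReal.mul_inv (by simp) (by simp)]
    norm_num⟩
  refine ((hg.mul (r := 2) hf).integrable_mul (hk.mul (r := 2) hh)).congr
    (ae_of_all _ fun ω => ?_)
  simp only [Pi.mul_apply]
  ring

theorem memLp_four_of_integrable_pow_four {f : Ω → ℝ} (hf : AEStronglyMeasurable f μ)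
    (h : Integrable (fun ω => f ω ^ 4) μ) : MemLp f 4 μ := by
  rw [← integrable_norm_rpow_iff hf (by norm_num) (by norm_num)]
  refine h.congr (ae_of_all _ fun ω => ?_)
  beta_reduce
  rw [ENNReal.toReal_ofNat, show (4 : ℝ) = (4 : ℕ) by norm_num, Real.rpow_natCast,
    Real.norm_eq_abs, pow_abs, abs_of_nonneg (by positivity)]

theorem measurable_det_of_entries {n : Type*} [Fintype n] [DecidableEq n]
    {m : MeasurableSpace Ω} {A : Ω → Matrix n n ℝ} (hA : ∀ a b, Measurable fun ω => A ω a b) :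
    Measurable fun ω => (A ω).det := by
  simp only [Matrix.det_apply]
  fun_prop

theorem sum_mul_pow_three_mul {κ R : Type*} [Fintype κ] [CommSemiring R] (a b : κ → R) (c : R) :
    (∑ k, a k * b k) ^ 3 * c =
      ∑ k : κ × κ × κ, a k.1 * a k.2.1 * a k.2.2 * (b k.1 * b k.2.1 * b k.2.2 * c) := by
  simp only [pow_three, Finset.sum_mul, Finset.mul_sum, Fintype.sum_prod_type]
  exact Finset.sum_congr rfl fun _ _ => Finset.sum_congr rfl fun _ _ =>
    Finset.sum_congr rfl fun _ _ => by ring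

theorem sum_triple_ite_eq_and_eq {κ R : Type*} [Fintype κ] [DecidableEq κ] [AddCommMonoid R]
    (f : κ → R) :
    ∑ k : κ × κ × κ, (if k.2.1 = k.1 ∧ k.2.2 = k.1 then f k.1 else 0) = ∑ k, f k := by
  simp [Fintype.sum_prod_type, ite_and, Finset.sum_ite_eq']

section Independent

variable {X : ι → Ω → ℝ}

theorem ProbabilityTheory.iIndepFun.memLp_finset_prod [IsFiniteMeasure μ] {p : ℝ≥0∞}
    (hindep : iIndepFun X μ) (hmeas : ∀ i, Measurable (X i)) (hX : ∀ i, MemLp (X i) p μ)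
    (s : Finset ι) : MemLp (∏ i ∈ s, X i) p μ := by
  classical
  induction s using Finset.induction_on with
  | empty => exact Finset.prod_empty (f := X) ▸ memLp_const 1
  | insert i s hi ih =>
    rw [Finset.prod_insert hi]
    exact (hindep.indepFun_finsetProd_of_notMem hmeas hi).symm.memLp_mul (hX i) ih

theorem memLp_det_of_iIndepFun {n : Type*} [Fintype n] [DecidableEq n] [IsFiniteMeasure μ]
    {p : ℝ≥0∞} (hindep : iIndepFun X μ) (hmeas : ∀ i, Measurable (X i))
    (hX : ∀ i, MemLp (X i) p μ) {e : n × n → ι} (he : e.Injective) :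
    MemLp (fun ω => (Matrix.of fun a b => X (e (a, b)) ω).det) p μ := by
  simp only [Matrix.det_apply', Matrix.of_apply]
  refine memLp_finsetSum _ fun σ _ => ?_
  have hinj : (fun a => e (σ a, a)).Injective := fun a b h => congrArg Prod.snd (he h)
  have hprod := (hindep.precomp hinj).memLp_finset_prod (fun _ => hmeas _) (fun _ => hX _) .univ
  rw [Finset.prod_fn] at hprod
  exact hprod.const_mul _

theorem identDistrib_precomp_of_injective {κ : Type*} [Fintype κ] (hmeas : ∀ i, Measurable (X i))
    (hindep : iIndepFun X μ) {ν : Measure ℝ} (hident : ∀ i, μ.map (X i) = ν)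
    {e e' : κ → ι} (he : e.Injective) (he' : e'.Injective) :
    IdentDistrib (fun ω k => X (e k) ω) (fun ω k => X (e' k) ω) μ μ where
  aemeasurable_fst := (measurable_pi_lambda _ fun k => hmeas (e k)).aemeasurable
  aemeasurable_snd := (measurable_pi_lambda _ fun k => hmeas (e' k)).aemeasurable
  map_eq := by
    rw [(hindep.precomp he).map_fun_eq_pi_map fun k => (hmeas _).aemeasurable,
      (hindep.precomp he').map_fun_eq_pi_map fun k => (hmeas _).aemeasurable]
    simp only [hident]

abbrev generatedBy (X : ι → Ω → ℝ) (S : Set ι) : MeasurableSpace Ω :=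
  ⨆ i ∈ S, MeasurableSpace.comap (X i) inferInstance

theorem measurable_generatedBy {S : Set ι} {i : ι} (hi : i ∈ S) :
    Measurable[generatedBy X S] (X i) :=
  Measurable.of_comap_le
    (le_iSup₂ (f := fun i (_ : i ∈ S) => MeasurableSpace.comap (X i) inferInstance) i hi)

theorem indepFun_of_measurable_generatedBy (hmeas : ∀ i, Measurable (X i))
    (hindep : iIndepFun X μ) {S T : Set ι} (hST : Disjoint S T) {F G : Ω → ℝ}
    (hF : Measurable[generatedBy X S] F) (hG : Measurable[generatedBy X T] G) :
    IndepFun F G μ := by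
  rw [IndepFun_iff_Indep]
  exact indep_of_indep_of_le (indep_iSup_of_disjoint (fun i => (hmeas i).comap_le)
    ((iIndepFun_iff_iIndep _ _ _).1 hindep) hST) hF.comap_le hG.comap_le

theorem integral_mul_eq_zero_of_notMem (hmeas : ∀ i, Measurable (X i))
    (hindep : iIndepFun X μ) {i : ι} (hcent : ∫ ω, X i ω ∂μ = 0) {S : Set ι} (hi : i ∉ S)
    {G : Ω → ℝ} (hG : Measurable[generatedBy X S] G) :
    ∫ ω, X i ω * G ω ∂μ = 0 := by
  have hle : generatedBy X S ≤ mΩ := iSup₂_le fun i _ => (hmeas i).comap_le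
  have hindG : IndepFun (X i) G μ := indepFun_of_measurable_generatedBy hmeas hindep
    (Set.disjoint_singleton_left.2 hi) (measurable_generatedBy rfl) hG
  rw [hindG.integral_fun_mul_eq_mul_integral (hmeas i).aestronglyMeasurable
    (hG.mono hle le_rfl).aestronglyMeasurable, hcent, zero_mul]

theorem integral_sum_mul_eq_zero {κ : Type*} [Fintype κ] (hmeas : ∀ i, Measurable (X i))
    (hindep : iIndepFun X μ) (hcent : ∀ i, ∫ ω, X i ω ∂μ = 0) (hX : ∀ i, Integrable (X i) μ)
    {x : κ → ι} {S : Set ι} (hxS : ∀ k, x k ∉ S) {G : κ → Ω → ℝ}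
    (hG : ∀ k, Measurable[generatedBy X S] (G k)) (hGint : ∀ k, Integrable (G k) μ) :
    ∫ ω, ∑ k, X (x k) ω * G k ω ∂μ = 0 := by
  have hterm (k : κ) : Integrable (fun ω => X (x k) ω * G k ω) μ :=
    (indepFun_of_measurable_generatedBy hmeas hindep (Set.disjoint_singleton_left.2 (hxS k))
      (measurable_generatedBy rfl) (hG k)).integrable_mul (hX _) (hGint k)
  rw [integral_finsetSum _ fun k _ => hterm k]
  exact Finset.sum_eq_zero fun k _ =>
    integral_mul_eq_zero_of_notMem hmeas hindep (hcent _) (hxS k) (hG k)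

theorem integral_mul_mul_eq_ite [DecidableEq ι] (hmeas : ∀ i, Measurable (X i))
    (hindep : iIndepFun X μ) (hcent : ∀ i, ∫ ω, X i ω ∂μ = 0) (i j k : ι) :
    ∫ ω, X i ω * X j ω * X k ω ∂μ = if j = i ∧ k = i then ∫ ω, X i ω ^ 3 ∂μ else 0 := by
  have hlone {a b c : ι} (hab : a ≠ b) (hac : a ≠ c) :
      ∫ ω, X a ω * (X b ω * X c ω) ∂μ = 0 :=
    integral_mul_eq_zero_of_notMem hmeas hindep (hcent a) (S := {b, c}) (by simp [hab, hac])
      ((measurable_generatedBy (by simp)).mul (measurable_generatedBy (by simp)))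
  split_ifs with h
  · obtain ⟨rfl, rfl⟩ := h
    simp only [pow_three']
  by_cases hji : j = i
  · subst hji
    have hkj : k ≠ j := fun hkj => h ⟨rfl, hkj⟩
    exact (integral_congr_ae (ae_of_all _ fun ω => by ring)).trans (hlone hkj hkj)
  by_cases hki : k = i
  · subst hki
    have hjk : j ≠ k := hji
    exact (integral_congr_ae (ae_of_all _ fun ω => by ring)).trans (hlone hjk hjk)
  exact (integral_congr_ae (ae_of_all _ fun ω => by ring)).trans
    (hlone (Ne.symm hji) (Ne.symm hki))

theorem integral_sum_mul_pow_three_mul {κ : Type*} [Fintype κ] [IsFiniteMeasure μ]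
    (hmeas : ∀ i, Measurable (X i)) (hindep : iIndepFun X μ) (hcent : ∀ i, ∫ ω, X i ω ∂μ = 0)
    (hX : ∀ i, MemLp (X i) 4 μ) {x : κ → ι} (hx : x.Injective) {S : Set ι} (hxS : ∀ k, x k ∉ S)
    {b : κ → Ω → ℝ} {c : Ω → ℝ} (hb : ∀ k, Measurable[generatedBy X S] (b k))
    (hc : Measurable[generatedBy X S] c) (hb4 : ∀ k, MemLp (b k) 4 μ) (hc4 : MemLp c 4 μ) :
    ∫ ω, (∑ k, X (x k) ω * b k ω) ^ 3 * c ω ∂μ =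
      ∑ k, (∫ ω, X (x k) ω ^ 3 ∂μ) * ∫ ω, b k ω ^ 3 * c ω ∂μ := by
  classical
  let xPart : κ × κ × κ → Ω → ℝ := fun k ω => X (x k.1) ω * X (x k.2.1) ω * X (x k.2.2) ω
  let bPart : κ × κ × κ → Ω → ℝ := fun k ω => b k.1 ω * b k.2.1 ω * b k.2.2 ω * c ω
  have hindep_parts (k : κ × κ × κ) : IndepFun (xPart k) (bPart k) μ := by
    have hxk (k : κ) : Measurable[generatedBy X (Set.range x)] (X (x k)) :=
      measurable_generatedBy ⟨k, rfl⟩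
    exact indepFun_of_measurable_generatedBy hmeas hindep
      (Set.disjoint_left.2 <| by rintro _ ⟨k, rfl⟩; exact hxS k) (((hxk _).mul (hxk _)).mul (hxk _))
      ((((hb _).mul (hb _)).mul (hb _)).mul hc)
  have hx_int (k : κ × κ × κ) : Integrable (xPart k) μ :=
    (integrable_mul_mul_mul_of_memLp_four (hX _) (hX _) (hX _) (memLp_const 1)).congr
      (ae_of_all _ fun ω => mul_one (xPart k ω))
  have hb_int (k : κ × κ × κ) : Integrable (bPart k) μ :=
    integrable_mul_mul_mul_of_memLp_four (hb4 _) (hb4 _) (hb4 _) hc4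
  calc ∫ ω, (∑ k, X (x k) ω * b k ω) ^ 3 * c ω ∂μ
      = ∑ k, (∫ ω, xPart k ω ∂μ) * ∫ ω, bPart k ω ∂μ := by
        rw [integral_congr_ae (ae_of_all _ fun ω => sum_mul_pow_three_mul _ _ _),
          integral_finsetSum (f := fun k ω => xPart k ω * bPart k ω) _ fun k _ =>
            (hindep_parts k).integrable_mul (hx_int k) (hb_int k)]
        exact Finset.sum_congr rfl fun k _ => (hindep_parts k).integral_fun_mul_eq_mul_integral
          (hx_int k).1 (hb_int k).1
    _ = ∑ k : κ × κ × κ, if k.2.1 = k.1 ∧ k.2.2 = k.1 then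
          (∫ ω, X (x k.1) ω ^ 3 ∂μ) * ∫ ω, b k.1 ω ^ 3 * c ω ∂μ else 0 := by
        refine Finset.sum_congr rfl fun ⟨k₁, k₂, k₃⟩ _ => ?_
        simp only [xPart, bPart, integral_mul_mul_eq_ite hmeas hindep hcent, hx.eq_iff]
        split_ifs with h
        · obtain ⟨rfl, rfl⟩ := h
          simp only [pow_three']
        · exact zero_mul _
    _ = _ := sum_triple_ite_eq_and_eq fun k => (∫ ω, X (x k) ω ^ 3 ∂μ) * ∫ ω, b k ω ^ 3 * c ω ∂μ

end Independent

section RandomMatrix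

variable (X : ℕ × ℕ → Ω → ℝ)

def entryMatrix (m : ℕ) (ω : Ω) : Matrix (Fin m) (Fin m) ℝ := Matrix.of fun a b => X (a, b) ω

def minorDet {m : ℕ} (i j : Fin (m + 1)) (ω : Ω) : ℝ :=
  ((entryMatrix X (m + 1) ω).submatrix i.succAbove j.succAbove).det

theorem det_entryMatrix_eq_sum_minorDet {m : ℕ} (i : Fin (m + 1)) (ω : Ω) :
    (entryMatrix X (m + 1) ω).det =
      ∑ k : Fin (m + 1), X ((i : ℕ), (k : ℕ)) ω * ((-1) ^ (i + k : ℕ) * minorDet X i k ω) := by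
  rw [Matrix.det_succ_row _ i]
  exact Finset.sum_congr rfl fun k _ => by simp only [entryMatrix, minorDet, Matrix.of_apply]; ring

variable {X}

theorem injective_val_pair {m n : ℕ} {f g : Fin m → Fin n} (hf : f.Injective)
    (hg : g.Injective) : (fun q : Fin m × Fin m => ((f q.1 : ℕ), (g q.2 : ℕ))).Injective :=
  fun _ _ h => Prod.ext (hf (Fin.val_injective (congrArg Prod.fst h)))
    (hg (Fin.val_injective (congrArg Prod.snd h)))

theorem measurable_minorDet {m : ℕ} {S : Set (ℕ × ℕ)} {i k : Fin (m + 1)}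
    (hS : ∀ a b, ((i.succAbove a : ℕ), (k.succAbove b : ℕ)) ∈ S) :
    Measurable[generatedBy X S] (minorDet X i k) :=
  measurable_det_of_entries fun a b => measurable_generatedBy (hS a b)

theorem memLp_det_entryMatrix [IsFiniteMeasure μ] (hmeas : ∀ p, Measurable (X p))
    (hindep : iIndepFun X μ) {p : ℝ≥0∞} (hX : ∀ q, MemLp (X q) p μ) (m : ℕ) :
    MemLp (fun ω => (entryMatrix X m ω).det) p μ :=
  memLp_det_of_iIndepFun hindep hmeas hX (injective_val_pair (f := id) (g := id)
    Function.injective_id Function.injective_id)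

theorem memLp_minorDet [IsFiniteMeasure μ] (hmeas : ∀ p, Measurable (X p))
    (hindep : iIndepFun X μ) {p : ℝ≥0∞} (hX : ∀ q, MemLp (X q) p μ) {m : ℕ}
    (i k : Fin (m + 1)) : MemLp (minorDet X i k) p μ :=
  memLp_det_of_iIndepFun hindep hmeas hX
    (injective_val_pair Fin.succAbove_right_injective Fin.succAbove_right_injective)

theorem integral_minorDet_pow_four (hmeas : ∀ p, Measurable (X p)) (hindep : iIndepFun X μ)
    {ν : Measure ℝ} (hident : ∀ p, μ.map (X p) = ν) {m : ℕ} (i j : Fin (m + 1)) :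
    ∫ ω, minorDet X i j ω ^ 4 ∂μ = ∫ ω, (entryMatrix X m ω).det ^ 4 ∂μ := by
  have hlaw := identDistrib_precomp_of_injective hmeas hindep hident
    (injective_val_pair i.succAbove_right_injective j.succAbove_right_injective)
    (injective_val_pair (f := id) (g := id) Function.injective_id Function.injective_id)
  have hdet : Measurable fun v : Fin m × Fin m → ℝ => (Matrix.of fun a b => v (a, b)).det ^ 4 :=
    (measurable_det_of_entries fun a b => measurable_pi_apply (a, b)).pow_const 4
  exact (hlaw.comp hdet).integral_eq

theorem integral_minorDet_pow_three_mul_minorDet_of_ne [IsFiniteMeasure μ]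
    (hmeas : ∀ p, Measurable (X p)) (hindep : iIndepFun X μ) (hcent : ∀ p, ∫ ω, X p ω ∂μ = 0)
    (hX : ∀ p, MemLp (X p) 4 μ) {m : ℕ} {i j k : Fin (m + 1)} (hkj : k ≠ j) :
    ∫ ω, minorDet X i k ω ^ 3 * minorDet X i j ω ∂μ = 0 := by
  cases m with
  | zero => exact absurd (Subsingleton.elim (α := Fin 1) k j) hkj
  | succ m =>
  obtain ⟨c, rfl⟩ := Fin.exists_succAbove_eq hkj
  -- expand `minorDet X i j` along the column of `X` that `minorDet X i (j.succAbove c)` avoids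
  let cell : Fin (m + 1) → ℕ × ℕ := fun r => ((i.succAbove r : ℕ), (j.succAbove c : ℕ))
  let S : Set (ℕ × ℕ) := {p | p.2 ≠ j.succAbove c}
  let N : Fin (m + 1) → Ω → ℝ := fun r ω =>
    (((entryMatrix X _ ω).submatrix i.succAbove j.succAbove).submatrix r.succAbove c.succAbove).det
  let G : Fin (m + 1) → Ω → ℝ := fun r ω =>
    minorDet X i (j.succAbove c) ω ^ 3 * ((-1) ^ (r + c : ℕ) * N r ω)
  have hexpand (ω : Ω) : minorDet X i (j.succAbove c) ω ^ 3 * minorDet X i j ω =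
      ∑ r, X (cell r) ω * G r ω := by
    rw [show minorDet X i j ω = _ from Matrix.det_succ_column _ c, Finset.mul_sum]
    exact Finset.sum_congr rfl fun r _ => by
      simp only [G, N, cell, entryMatrix, Matrix.submatrix_apply, Matrix.of_apply]; ring
  have hcell (r : Fin (m + 1)) : cell r ∉ S := fun h => h rfl
  have hG (r : Fin (m + 1)) : Measurable[generatedBy X S] (G r) := by
    refine (measurable_minorDet fun a b => ?_).pow_const 3 |>.mul
      (measurable_const.mul (measurable_det_of_entries fun a b => measurable_generatedBy ?_))
    · exact Fin.val_injective.ne (Fin.succAbove_ne _ b)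
    · exact Fin.val_injective.ne (Fin.succAbove_right_injective.ne (Fin.succAbove_ne c b))
  have hGint (r : Fin (m + 1)) : Integrable (G r) μ := by
    have hM := memLp_minorDet hmeas hindep hX i (j.succAbove c)
    have hN : MemLp (N r) 4 μ := memLp_det_of_iIndepFun hindep hmeas hX
      (injective_val_pair (Fin.succAbove_right_injective.comp Fin.succAbove_right_injective)
        (Fin.succAbove_right_injective.comp Fin.succAbove_right_injective))
    refine (integrable_mul_mul_mul_of_memLp_four hM hM hM (hN.const_mul ((-1) ^ (r + c : ℕ)))).congr
      (ae_of_all _ fun ω => ?_)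
    simp only [G]
    ring
  rw [integral_congr_ae (ae_of_all _ hexpand)]
  exact integral_sum_mul_eq_zero hmeas hindep hcent (fun p => (hX p).integrable (by norm_num))
    hcell hG hGint

theorem integral_det_pow_three_mul_minorDet [IsFiniteMeasure μ]
    (hmeas : ∀ p, Measurable (X p)) (hindep : iIndepFun X μ) (hcent : ∀ p, ∫ ω, X p ω ∂μ = 0)
    (hX : ∀ p, MemLp (X p) 4 μ) {ν : Measure ℝ} (hident : ∀ p, μ.map (X p) = ν) {m : ℕ}
    (i j : Fin (m + 1)) :
    ∫ ω, (entryMatrix X (m + 1) ω).det ^ 3 * minorDet X i j ω ∂μ =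
      (-1) ^ (i + j : ℕ) * (∫ ω, X ((i : ℕ), (j : ℕ)) ω ^ 3 ∂μ) *
        ∫ ω, (entryMatrix X m ω).det ^ 4 ∂μ := by
  have hS (k : Fin (m + 1)) :
      ∀ a b, ((i.succAbove a : ℕ), (k.succAbove b : ℕ)) ∈ {p : ℕ × ℕ | p.1 ≠ i} :=
    fun a _ => Fin.val_injective.ne (Fin.succAbove_ne i a)
  simp_rw [det_entryMatrix_eq_sum_minorDet X i]
  rw [integral_sum_mul_pow_three_mul hmeas hindep hcent hX
      (x := fun k : Fin (m + 1) => ((i : ℕ), (k : ℕ))) (S := {p | p.1 ≠ i})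
      (b := fun k ω => (-1) ^ (i + k : ℕ) * minorDet X i k ω)
      (fun k k' h => Fin.val_injective (congrArg Prod.snd h)) (fun _ h => h rfl)
      (fun k => (measurable_minorDet (hS k)).const_mul _) (measurable_minorDet (hS j))
      (fun k => (memLp_minorDet hmeas hindep hX i k).const_mul _)
      (memLp_minorDet hmeas hindep hX i j),
    Finset.sum_eq_single j (fun k _ hkj => ?_) (by simp)]
  · have hsign : ((-1 : ℝ) ^ (i + j : ℕ)) ^ 3 = (-1) ^ (i + j : ℕ) := by
      rw [← pow_mul, mul_comm, pow_mul]
      norm_num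
    simp only [mul_pow, hsign, mul_assoc, integral_const_mul, ← pow_succ,
      integral_minorDet_pow_four hmeas hindep hident]
    ring
  · simp only [mul_pow, mul_assoc, integral_const_mul,
      integral_minorDet_pow_three_mul_minorDet_of_ne hmeas hindep hcent hX hkj, mul_zero]

theorem integral_det_pow_three_mul_sum_cofactor [IsFiniteMeasure μ]
    (hmeas : ∀ p, Measurable (X p)) (hindep : iIndepFun X μ) (hcent : ∀ p, ∫ ω, X p ω ∂μ = 0)
    (hX : ∀ p, MemLp (X p) 4 μ) {ν : Measure ℝ} (hident : ∀ p, μ.map (X p) = ν) {μ₃ : ℝ}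
    (hμ₃ : ∀ p, ∫ ω, X p ω ^ 3 ∂μ = μ₃) (m : ℕ) :
    ∫ ω, (entryMatrix X (m + 1) ω).det ^ 3 * ∑ i : Fin (m + 1), ∑ j : Fin (m + 1),
        (-1 : ℝ) ^ (i + j : ℕ) * minorDet X i j ω ∂μ =
      ((m : ℝ) + 1) ^ 2 * μ₃ * ∫ ω, (entryMatrix X m ω).det ^ 4 ∂μ := by
  have hint (i j : Fin (m + 1)) :
      Integrable (fun ω => (entryMatrix X (m + 1) ω).det ^ 3 * minorDet X i j ω) μ := by
    have hdet := memLp_det_entryMatrix hmeas hindep hX (m + 1)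
    simpa only [pow_three, mul_assoc] using integrable_mul_mul_mul_of_memLp_four hdet hdet hdet
      (memLp_minorDet hmeas hindep hX i j)
  simp_rw [Finset.mul_sum, mul_left_comm _ ((-1 : ℝ) ^ _)]
  rw [integral_finsetSum _ fun i _ => integrable_finsetSum _ fun j _ => (hint i j).const_mul _]
  simp_rw [integral_finsetSum _ fun j _ => (hint _ j).const_mul _, integral_const_mul,
    integral_det_pow_three_mul_minorDet hmeas hindep hcent hX hident, hμ₃, ← mul_assoc,
    ← pow_add, ← two_mul, pow_mul, neg_one_sq, one_pow, one_mul]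
  simp only [Finset.sum_const, Finset.card_univ, Fintype.card_fin, nsmul_eq_mul]
  push_cast
  ring

end RandomMatrix

end

/-- For i.i.d. centered entries with third moment `μ₃`,
`E[det(B)³ · S] = n² μ₃ E[det(B')⁴]` where `B` is `n × n` (here `n = m + 1`),
`S` is the sum of all cofactors of `B`, and `B'` is `(n-1) × (n-1)`. -/
theorem expectation_det_cubed_mul_cofactor_sum
    {Ω : Type*} [MeasureSpace Ω] [IsProbabilityMeasure (ℙ : Measure Ω)]
    (m : ℕ) (X : ℕ × ℕ → Ω → ℝ)
    (hmeas : ∀ p, Measurable (X p))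
    (hindep : iIndepFun X ℙ)
    (hident : ∀ p, Measure.map (X p) ℙ = Measure.map (X (0, 0)) ℙ)
    (hcent : (∫ ω, X (0, 0) ω) = 0)
    (hmom4 : Integrable (fun ω => (X (0, 0) ω) ^ 4) ℙ)
    (μ₃ : ℝ) (hμ₃ : μ₃ = ∫ ω, (X (0, 0) ω) ^ 3) :
    (∫ ω, (Matrix.det (Matrix.of fun i j : Fin (m + 1) => X ((i : ℕ), (j : ℕ)) ω)) ^ 3 *
        ∑ i : Fin (m + 1), ∑ j : Fin (m + 1),
          (-1 : ℝ) ^ ((i : ℕ) + (j : ℕ)) *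
            Matrix.det ((Matrix.of fun i' j' : Fin (m + 1) =>
              X ((i' : ℕ), (j' : ℕ)) ω).submatrix i.succAbove j.succAbove)) =
      ((m : ℝ) + 1) ^ 2 * μ₃ *
        ∫ ω, (Matrix.det (Matrix.of fun i j : Fin m => X ((i : ℕ), (j : ℕ)) ω)) ^ 4 := by
  have hlaw (p : ℕ × ℕ) : IdentDistrib (X p) (X (0, 0)) :=
    ⟨(hmeas p).aemeasurable, (hmeas _).aemeasurable, hident p⟩
  have hX (p : ℕ × ℕ) : MemLp (X p) 4 := (hlaw p).memLp_iff.2 <|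
    memLp_four_of_integrable_pow_four (hmeas _).aestronglyMeasurable hmom4
  have hcent' (p : ℕ × ℕ) : ∫ ω, X p ω = 0 := (hlaw p).integral_eq.trans hcent
  have hμ₃' (p : ℕ × ℕ) : ∫ ω, X p ω ^ 3 = μ₃ :=
    hμ₃ ▸ ((hlaw p).comp (measurable_id.pow_const 3)).integral_eq
  exact integral_det_pow_three_mul_sum_cofactor hmeas hindep hcent' hX hident hμ₃' m
end

section
/- Let X_{ij} be i.i.d. centered random variables with finite fourth moment, B = (X_{ij})_{n×n}, and B_{ij} the matrix with row i, column j deleted. Then E[(det B)² · det(B_{11}) · det(B_{12})] = 0. -/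
open MeasureTheory ProbabilityTheory Nat

private lemma card_fiber_le_one {γ : Type*} [Fintype γ] [DecidableEq γ] (f : γ → ℕ × ℕ)
    (hf : Function.Injective f) (p : ℕ × ℕ) :
    (Finset.univ.filter fun i => f i = p).card ≤ 1 := by
  refine Finset.card_le_one.2 ?_
  intro a ha b hb
  simp only [Finset.mem_filter] at ha hb
  exact hf (ha.2.trans hb.2.symm)

private lemma card_fiber_eq_one {γ : Type*} [Fintype γ] [DecidableEq γ] {f : γ → ℕ × ℕ}
    (hf : Function.Injective f) {p : ℕ × ℕ} {i₀ : γ} (h : f i₀ = p) :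
    (Finset.univ.filter fun i => f i = p).card = 1 :=
  le_antisymm (card_fiber_le_one f hf p)
    (Finset.card_pos.2 ⟨i₀, by simp [h]⟩)

private lemma card_fiber_eq_zero {γ : Type*} [Fintype γ] [DecidableEq γ] {f : γ → ℕ × ℕ}
    {p : ℕ × ℕ} (h : ∀ i, f i ≠ p) :
    (Finset.univ.filter fun i => f i = p).card = 0 := by
  rw [Finset.card_eq_zero]
  exact Finset.filter_eq_empty_iff.2 fun {i} _ => h i

private lemma prod_comp_extend {γ : Type*} [Fintype γ] [DecidableEq γ] (h : γ → ℕ × ℕ)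
    (F : ℕ × ℕ → ℝ) (U : Finset (ℕ × ℕ)) (hU : Finset.univ.image h ⊆ U) :
    ∏ i, F (h i) = ∏ p ∈ U, F p ^ (Finset.univ.filter fun i => h i = p).card := by
  classical
  rw [Finset.prod_comp]
  refine Finset.prod_subset hU fun p _ hp => ?_
  have he : (Finset.univ.filter fun i => h i = p) = ∅ :=
    Finset.filter_eq_empty_iff.2 fun {i} _ hip =>
      hp (Finset.mem_image.2 ⟨i, Finset.mem_univ _, hip⟩)
  rw [he]
  simp
private lemma prod_four {γ₁ γ₂ γ₃ γ₄ : Type*} [Fintype γ₁] [Fintype γ₂] [Fintype γ₃] [Fintype γ₄]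
    [DecidableEq γ₁] [DecidableEq γ₂] [DecidableEq γ₃] [DecidableEq γ₄]
    (h₁ : γ₁ → ℕ × ℕ) (h₂ : γ₂ → ℕ × ℕ) (h₃ : γ₃ → ℕ × ℕ) (h₄ : γ₄ → ℕ × ℕ)
    (F : ℕ × ℕ → ℝ) :
    (∏ i, F (h₁ i)) * (∏ i, F (h₂ i)) * (∏ i, F (h₃ i)) * (∏ i, F (h₄ i)) =
    ∏ p ∈ ((Finset.univ.image h₁ ∪ Finset.univ.image h₂) ∪ Finset.univ.image h₃)
        ∪ Finset.univ.image h₄,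
      F p ^ ((Finset.univ.filter fun i => h₁ i = p).card
        + (Finset.univ.filter fun i => h₂ i = p).card
        + (Finset.univ.filter fun i => h₃ i = p).card
        + (Finset.univ.filter fun i => h₄ i = p).card) := by
  classical
  set U := ((Finset.univ.image h₁ ∪ Finset.univ.image h₂) ∪ Finset.univ.image h₃)
      ∪ Finset.univ.image h₄ with hUdef
  have hs1 : Finset.univ.image h₁ ⊆ U := fun x hx => Finset.mem_union_left _
    (Finset.mem_union_left _ (Finset.mem_union_left _ hx))
  have hs2 : Finset.univ.image h₂ ⊆ U := fun x hx => Finset.mem_union_left _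
    (Finset.mem_union_left _ (Finset.mem_union_right _ hx))
  have hs3 : Finset.univ.image h₃ ⊆ U := fun x hx => Finset.mem_union_left _
    (Finset.mem_union_right _ hx)
  have hs4 : Finset.univ.image h₄ ⊆ U := fun x hx => Finset.mem_union_right _ hx
  rw [prod_comp_extend h₁ F U hs1, prod_comp_extend h₂ F U hs2,
    prod_comp_extend h₃ F U hs3, prod_comp_extend h₄ F U hs4]
  simp_rw [← Finset.prod_mul_distrib, ← pow_add]
private lemma integrable_pow_iid {Ω : Type*} [MeasureSpace Ω]
    [IsProbabilityMeasure (ℙ : Measure Ω)]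
    (X : ℕ × ℕ → Ω → ℝ) (hmeas : ∀ p, Measurable (X p))
    (hident : ∀ p, Measure.map (X p) ℙ = Measure.map (X (0, 0)) ℙ)
    (hmom4 : Integrable (fun ω => (X (0, 0) ω) ^ 4) ℙ) :
    ∀ p k, k ≤ 4 → Integrable (fun ω => X p ω ^ k) ℙ := by
  have h4 : ∀ p, Integrable (fun ω => X p ω ^ 4) ℙ := by
    intro p
    have hm : Measurable fun x : ℝ => x ^ 4 := measurable_id.pow_const 4
    have h0 : Integrable (fun x : ℝ => x ^ 4) (Measure.map (X (0, 0)) ℙ) :=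
      (integrable_map_measure hm.aestronglyMeasurable (hmeas _).aemeasurable).2 hmom4
    have h1 : Integrable (fun x : ℝ => x ^ 4) (Measure.map (X p) ℙ) := by
      rw [hident p]; exact h0
    have h2 := (integrable_map_measure hm.aestronglyMeasurable (hmeas p).aemeasurable).1 h1
    exact h2
  intro p k hk
  refine Integrable.mono' ((h4 p).add (integrable_const 1))
    ((hmeas p).pow_const k).aestronglyMeasurable
    (Filter.Eventually.of_forall fun ω => ?_)
  have h40 : (0 : ℝ) ≤ X p ω ^ 4 := by positivity
  have habs : ‖X p ω ^ k‖ = |X p ω| ^ k := by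
    rw [Real.norm_eq_abs, abs_pow]
  rcases le_or_gt (|X p ω|) 1 with h | h
  · calc ‖X p ω ^ k‖ = |X p ω| ^ k := habs
      _ ≤ 1 := pow_le_one₀ (abs_nonneg _) h
      _ ≤ X p ω ^ 4 + 1 := by linarith
  · have h1 : |X p ω| ^ k ≤ |X p ω| ^ 4 := pow_le_pow_right₀ h.le hk
    have h2 : |X p ω| ^ 4 = X p ω ^ 4 := by
      rw [← abs_pow, abs_of_nonneg h40]
    calc ‖X p ω ^ k‖ = |X p ω| ^ k := habs
      _ ≤ X p ω ^ 4 := by rw [← h2]; exact h1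
      _ ≤ X p ω ^ 4 + 1 := by linarith

private lemma integral_zero_iid {Ω : Type*} [MeasureSpace Ω]
    [IsProbabilityMeasure (ℙ : Measure Ω)]
    (X : ℕ × ℕ → Ω → ℝ) (hmeas : ∀ p, Measurable (X p))
    (hident : ∀ p, Measure.map (X p) ℙ = Measure.map (X (0, 0)) ℙ)
    (hcent : (∫ ω, X (0, 0) ω) = 0) :
    ∀ p, (∫ ω, X p ω) = 0 := by
  intro p
  have h1 : (∫ ω, X p ω) = ∫ x, x ∂(Measure.map (X p) ℙ) :=
    (integral_map (hmeas p).aemeasurable aestronglyMeasurable_id).symm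
  have h2 : (∫ x, x ∂(Measure.map (X (0, 0)) ℙ)) = ∫ ω, X (0, 0) ω :=
    integral_map (hmeas _).aemeasurable aestronglyMeasurable_id
  rw [h1, hident p, h2, hcent]

private lemma integral_prod_pow {Ω : Type*} [MeasureSpace Ω]
    [IsProbabilityMeasure (ℙ : Measure Ω)]
    (X : ℕ × ℕ → Ω → ℝ) (hmeas : ∀ p, Measurable (X p))
    (hindep : iIndepFun X ℙ)
    (hint : ∀ p k, k ≤ 4 → Integrable (fun ω => X p ω ^ k) ℙ)
    (d : ℕ × ℕ → ℕ) (hd : ∀ p, d p ≤ 4) (s : Finset (ℕ × ℕ)) :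
    Integrable (fun ω => ∏ p ∈ s, X p ω ^ d p) ℙ ∧
    (∫ ω, ∏ p ∈ s, X p ω ^ d p) = ∏ p ∈ s, ∫ ω, X p ω ^ d p := by
  classical
  induction s using Finset.induction_on with
  | empty => simp
  | @insert a s ha ih =>
    set f : ℕ × ℕ → Ω → ℝ := fun p ω => X p ω ^ d p with hf
    have hfm : ∀ p, Measurable (f p) := fun p => (hmeas p).pow_const (d p)
    have hiid : iIndepFun f ℙ :=
      hindep.comp (fun p (x : ℝ) => x ^ d p) (fun p => measurable_id.pow_const (d p))
    have hIndep : IndepFun (∏ p ∈ s, f p) (f a) ℙ :=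
      hiid.indepFun_finsetProd_of_notMem hfm ha
    have hps : (∏ p ∈ s, f p) = fun ω => ∏ p ∈ s, X p ω ^ d p := by
      funext ω; simp [hf]
    have hint_a : Integrable (f a) ℙ := hint a (d a) (hd a)
    have hIndep' : IndepFun (f a) (fun ω => ∏ p ∈ s, X p ω ^ d p) ℙ := hps ▸ hIndep.symm
    have hmul : Integrable (f a * fun ω => ∏ p ∈ s, X p ω ^ d p) ℙ :=
      hIndep'.integrable_mul hint_a ih.1
    have hkey : (fun ω => ∏ p ∈ insert a s, X p ω ^ d p) =
        (f a * fun ω => ∏ p ∈ s, X p ω ^ d p) := by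
      funext ω; simp [Finset.prod_insert ha, hf]
    constructor
    · rw [hkey]; exact hmul
    · have hmul2 := hIndep'.integral_mul_eq_mul_integral hint_a.1 ih.1.1
      calc (∫ ω, ∏ p ∈ insert a s, X p ω ^ d p)
          = ∫ ω, (f a * fun ω' => ∏ p ∈ s, X p ω' ^ d p) ω := by rw [hkey]
        _ = (∫ ω, f a ω) * ∫ ω, ∏ p ∈ s, X p ω ^ d p := hmul2
        _ = ∏ p ∈ insert a s, ∫ ω, X p ω ^ d p := by
            rw [ih.2, Finset.prod_insert ha]
private lemma exists_deg_one (m : ℕ) (σ τ : Equiv.Perm (Fin (m + 2)))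
    (α β : Equiv.Perm (Fin (m + 1))) :
    ∃ p₀ ∈ ((Finset.univ.image (fun i : Fin (m + 2) => ((σ i : ℕ), (i : ℕ))) ∪
        Finset.univ.image (fun i : Fin (m + 2) => ((τ i : ℕ), (i : ℕ)))) ∪
        Finset.univ.image (fun b : Fin (m + 1) => ((α b : ℕ) + 1, (b : ℕ) + 1))) ∪
        Finset.univ.image
          (fun b : Fin (m + 1) => ((β b : ℕ) + 1, ((1 : Fin (m + 2)).succAbove b : ℕ))),
      (Finset.univ.filter fun i : Fin (m + 2) => ((σ i : ℕ), (i : ℕ)) = p₀).card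
        + (Finset.univ.filter fun i : Fin (m + 2) => ((τ i : ℕ), (i : ℕ)) = p₀).card
        + (Finset.univ.filter fun b : Fin (m + 1) => ((α b : ℕ) + 1, (b : ℕ) + 1) = p₀).card
        + (Finset.univ.filter fun b : Fin (m + 1) =>
            ((β b : ℕ) + 1, ((1 : Fin (m + 2)).succAbove b : ℕ)) = p₀).card = 1 := by
  classical
  set f1 : Fin (m + 2) → ℕ × ℕ := fun i => ((σ i : ℕ), (i : ℕ)) with hf1
  set f2 : Fin (m + 2) → ℕ × ℕ := fun i => ((τ i : ℕ), (i : ℕ)) with hf2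
  set f3 : Fin (m + 1) → ℕ × ℕ := fun b => ((α b : ℕ) + 1, (b : ℕ) + 1) with hf3
  set f4 : Fin (m + 1) → ℕ × ℕ :=
    fun b => ((β b : ℕ) + 1, ((1 : Fin (m + 2)).succAbove b : ℕ)) with hf4
  have hone : ((1 : Fin (m + 2)) : ℕ) = 1 := Fin.val_one _
  have hinj1 : Function.Injective f1 := by
    intro i j h
    exact Fin.val_injective (congrArg Prod.snd h)
  have hinj2 : Function.Injective f2 := by
    intro i j h
    exact Fin.val_injective (congrArg Prod.snd h)
  have hinj3 : Function.Injective f3 := by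
    intro i j h
    have h2 : ((i : ℕ)) + 1 = (j : ℕ) + 1 := congrArg Prod.snd h
    exact Fin.val_injective (Nat.succ_injective h2)
  have hinj4 : Function.Injective f4 := by
    intro i j h
    have h2 : ((1 : Fin (m + 2)).succAbove i : ℕ) = ((1 : Fin (m + 2)).succAbove j : ℕ) :=
      congrArg Prod.snd h
    exact Fin.succAbove_right_injective (Fin.val_injective h2)
  have hcol4 : ∀ b : Fin (m + 1), ((1 : Fin (m + 2)).succAbove b : ℕ) ≠ 1 := by
    intro b h
    exact Fin.succAbove_ne (1 : Fin (m + 2)) b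
      (Fin.val_injective (h.trans hone.symm))
  -- row values in column 1
  set r1 : ℕ := (σ 1 : ℕ) with hr1
  set r2 : ℕ := (τ 1 : ℕ) with hr2
  set r3 : ℕ := (α 0 : ℕ) + 1 with hr3
  -- counting in column 1
  have hval1 : ∀ i : Fin (m + 2), (i : ℕ) = 1 → i = 1 := by
    intro i h; exact Fin.val_injective (h.trans hone.symm)
  have hc1_eq : ∀ r, r1 = r → (Finset.univ.filter fun i => f1 i = (r, 1)).card = 1 := by
    intro r hr
    exact card_fiber_eq_one hinj1 (show f1 1 = (r, 1) by simp [hf1, hone, ← hr, hr1])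
  have hc1_ne : ∀ r, r1 ≠ r → (Finset.univ.filter fun i => f1 i = (r, 1)).card = 0 := by
    intro r hr
    refine card_fiber_eq_zero fun i h => ?_
    have h2 : (i : ℕ) = 1 := congrArg Prod.snd h
    have h3 : i = 1 := hval1 i h2
    exact hr (by rw [hr1, ← h3]; exact congrArg Prod.fst h)
  have hc2_eq : ∀ r, r2 = r → (Finset.univ.filter fun i => f2 i = (r, 1)).card = 1 := by
    intro r hr
    exact card_fiber_eq_one hinj2 (show f2 1 = (r, 1) by simp [hf2, hone, ← hr, hr2])
  have hc2_ne : ∀ r, r2 ≠ r → (Finset.univ.filter fun i => f2 i = (r, 1)).card = 0 := by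
    intro r hr
    refine card_fiber_eq_zero fun i h => ?_
    have h2 : (i : ℕ) = 1 := congrArg Prod.snd h
    have h3 : i = 1 := hval1 i h2
    exact hr (by rw [hr2, ← h3]; exact congrArg Prod.fst h)
  have hc3_eq : ∀ r, r3 = r → (Finset.univ.filter fun b => f3 b = (r, 1)).card = 1 := by
    intro r hr
    exact card_fiber_eq_one hinj3 (show f3 0 = (r, 1) by simp [hf3, ← hr, hr3])
  have hc3_ne : ∀ r, r3 ≠ r → (Finset.univ.filter fun b => f3 b = (r, 1)).card = 0 := by
    intro r hr
    refine card_fiber_eq_zero fun b h => ?_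
    have h2 : (b : ℕ) + 1 = 1 := congrArg Prod.snd h
    have h3 : b = 0 := Fin.val_injective (Nat.succ_injective h2)
    exact hr (by rw [hr3, ← h3]; exact congrArg Prod.fst h)
  have hc4_col1 : ∀ r, (Finset.univ.filter fun b => f4 b = (r, 1)).card = 0 := by
    intro r
    refine card_fiber_eq_zero fun b h => ?_
    exact hcol4 b (congrArg Prod.snd h)
  by_cases h12 : r1 = r2
  · by_cases h13 : r1 = r3
    · -- case B : all three rows equal
      have hb₀ : β (β.symm (α 0)) = α 0 := Equiv.apply_symm_apply β (α 0)
      refine ⟨((α 0 : ℕ) + 1, ((1 : Fin (m + 2)).succAbove (β.symm (α 0)) : ℕ)), ?_, ?_⟩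
      · refine Finset.mem_union_right _
          (Finset.mem_image.2 ⟨β.symm (α 0), Finset.mem_univ _, ?_⟩)
        rw [hf4]
        simp only [hb₀]
      · set c : ℕ := ((1 : Fin (m + 2)).succAbove (β.symm (α 0)) : ℕ) with hc
        have hcne : c ≠ 1 := hcol4 (β.symm (α 0))
        have d1 : (Finset.univ.filter fun i => f1 i = ((α 0 : ℕ) + 1, c)).card = 0 := by
          refine card_fiber_eq_zero fun i h => ?_
          have hrow : (σ i : ℕ) = (α 0 : ℕ) + 1 := congrArg Prod.fst h
          have hσ : σ i = σ 1 := Fin.val_injective (by rw [hrow, ← hr1, h13, hr3])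
          have hi1 : i = 1 := σ.injective hσ
          have hcol : (i : ℕ) = c := congrArg Prod.snd h
          exact hcne (by rw [← hcol, hi1, hone])
        have d2 : (Finset.univ.filter fun i => f2 i = ((α 0 : ℕ) + 1, c)).card = 0 := by
          refine card_fiber_eq_zero fun i h => ?_
          have hrow : (τ i : ℕ) = (α 0 : ℕ) + 1 := congrArg Prod.fst h
          have hτ : τ i = τ 1 := Fin.val_injective (by rw [hrow, ← hr2, ← h12, h13, hr3])
          have hi1 : i = 1 := τ.injective hτ
          have hcol : (i : ℕ) = c := congrArg Prod.snd h
          exact hcne (by rw [← hcol, hi1, hone])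
        have d3 : (Finset.univ.filter fun b => f3 b = ((α 0 : ℕ) + 1, c)).card = 0 := by
          refine card_fiber_eq_zero fun b h => ?_
          have hrow : (α b : ℕ) + 1 = (α 0 : ℕ) + 1 := congrArg Prod.fst h
          have hb : b = 0 := α.injective (Fin.val_injective (Nat.succ_injective hrow))
          have hcol : (b : ℕ) + 1 = c := congrArg Prod.snd h
          exact hcne (by rw [← hcol, hb, Fin.val_zero])
        have d4 : (Finset.univ.filter fun b => f4 b = ((α 0 : ℕ) + 1, c)).card = 1 := by
          refine card_fiber_eq_one hinj4
            (show f4 (β.symm (α 0)) = ((α 0 : ℕ) + 1, c) from ?_)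
          rw [hf4, hc]
          simp only [hb₀]
        rw [d1, d2, d3, d4]
    · -- r3 ≠ r1 = r2 : take (r3, 1)
      refine ⟨(r3, 1), ?_, ?_⟩
      · refine Finset.mem_union_left _ (Finset.mem_union_right _
          (Finset.mem_image.2 ⟨0, Finset.mem_univ _, ?_⟩))
        simp [hf3, hr3]
      · rw [hc1_ne r3 h13, hc2_ne r3 (h12 ▸ h13), hc3_eq r3 rfl, hc4_col1]
  · by_cases h13 : r1 = r3
    · -- r1 = r3 ≠ r2 : take (r2, 1)
      refine ⟨(r2, 1), ?_, ?_⟩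
      · refine Finset.mem_union_left _ (Finset.mem_union_left _ (Finset.mem_union_right _
          (Finset.mem_image.2 ⟨1, Finset.mem_univ _, ?_⟩)))
        simp [hf2, hr2, hone]
      · rw [hc1_ne r2 h12, hc2_eq r2 rfl, hc3_ne r2 (fun h => h12 (h13.trans h)), hc4_col1]
    · -- r1 ∉ {r2, r3} : take (r1, 1)
      refine ⟨(r1, 1), ?_, ?_⟩
      · refine Finset.mem_union_left _ (Finset.mem_union_left _ (Finset.mem_union_left _
          (Finset.mem_image.2 ⟨1, Finset.mem_univ _, ?_⟩)))
        simp [hf1, hr1, hone]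
      · rw [hc1_eq r1 rfl, hc2_ne r1 (fun h => h12 h.symm), hc3_ne r1 (fun h => h13 h.symm),
          hc4_col1]
private lemma inj_perm_pair {m : ℕ} (σ : Equiv.Perm (Fin (m + 2))) :
    Function.Injective (fun i : Fin (m + 2) => ((σ i : ℕ), (i : ℕ))) := by
  intro i j h
  exact Fin.val_injective (congrArg Prod.snd h)

private lemma inj_perm_pair3 {m : ℕ} (α : Equiv.Perm (Fin (m + 1))) :
    Function.Injective (fun b : Fin (m + 1) => ((α b : ℕ) + 1, (b : ℕ) + 1)) := by
  intro i j h
  exact Fin.val_injective (Nat.succ_injective (congrArg Prod.snd h))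

private lemma inj_perm_pair4 {m : ℕ} (β : Equiv.Perm (Fin (m + 1))) :
    Function.Injective
      (fun b : Fin (m + 1) => ((β b : ℕ) + 1, ((1 : Fin (m + 2)).succAbove b : ℕ))) := by
  intro i j h
  exact Fin.succAbove_right_injective (Fin.val_injective (congrArg Prod.snd h))

/-- For i.i.d. centered entries with finite fourth moment and `B` of size
`n × n` with `n ≥ 2` (here `n = m + 2`), `E[(det B)² det(B₁₁) det(B₁₂)] = 0`. -/
theorem expectation_det_sq_mul_minor11_mul_minor12
    {Ω : Type*} [MeasureSpace Ω] [IsProbabilityMeasure (ℙ : Measure Ω)]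
    (m : ℕ) (X : ℕ × ℕ → Ω → ℝ)
    (hmeas : ∀ p, Measurable (X p))
    (hindep : iIndepFun X ℙ)
    (hident : ∀ p, Measure.map (X p) ℙ = Measure.map (X (0, 0)) ℙ)
    (hcent : (∫ ω, X (0, 0) ω) = 0)
    (hmom4 : Integrable (fun ω => (X (0, 0) ω) ^ 4) ℙ) :
    (∫ ω, (Matrix.det (Matrix.of fun i j : Fin (m + 2) => X ((i : ℕ), (j : ℕ)) ω)) ^ 2 *
        Matrix.det ((Matrix.of fun i j : Fin (m + 2) =>
          X ((i : ℕ), (j : ℕ)) ω).submatrix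
            (0 : Fin (m + 2)).succAbove (0 : Fin (m + 2)).succAbove) *
        Matrix.det ((Matrix.of fun i j : Fin (m + 2) =>
          X ((i : ℕ), (j : ℕ)) ω).submatrix
            (0 : Fin (m + 2)).succAbove (1 : Fin (m + 2)).succAbove)) = 0 := by
  classical
  have hint := integrable_pow_iid X hmeas hident hmom4
  have hzero1 := integral_zero_iid X hmeas hident hcent
  -- notation for the finset of positions and the degree function
  let U : Equiv.Perm (Fin (m + 2)) → Equiv.Perm (Fin (m + 2)) →
      Equiv.Perm (Fin (m + 1)) → Equiv.Perm (Fin (m + 1)) → Finset (ℕ × ℕ) :=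
    fun σ τ α β =>
      ((Finset.univ.image (fun i : Fin (m + 2) => ((σ i : ℕ), (i : ℕ))) ∪
        Finset.univ.image (fun i : Fin (m + 2) => ((τ i : ℕ), (i : ℕ)))) ∪
        Finset.univ.image (fun b : Fin (m + 1) => ((α b : ℕ) + 1, (b : ℕ) + 1))) ∪
        Finset.univ.image
          (fun b : Fin (m + 1) => ((β b : ℕ) + 1, ((1 : Fin (m + 2)).succAbove b : ℕ)))
  let D : Equiv.Perm (Fin (m + 2)) → Equiv.Perm (Fin (m + 2)) →
      Equiv.Perm (Fin (m + 1)) → Equiv.Perm (Fin (m + 1)) → ℕ × ℕ → ℕ :=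
    fun σ τ α β p =>
      (Finset.univ.filter fun i : Fin (m + 2) => ((σ i : ℕ), (i : ℕ)) = p).card
        + (Finset.univ.filter fun i : Fin (m + 2) => ((τ i : ℕ), (i : ℕ)) = p).card
        + (Finset.univ.filter fun b : Fin (m + 1) => ((α b : ℕ) + 1, (b : ℕ) + 1) = p).card
        + (Finset.univ.filter fun b : Fin (m + 1) =>
            ((β b : ℕ) + 1, ((1 : Fin (m + 2)).succAbove b : ℕ)) = p).card
  -- determinant expansions
  have hdetB : ∀ ω, Matrix.det (Matrix.of fun i j : Fin (m + 2) => X ((i : ℕ), (j : ℕ)) ω)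
      = ∑ σ : Equiv.Perm (Fin (m + 2)),
          ((Equiv.Perm.sign σ : ℤ) : ℝ) * ∏ i, X ((σ i : ℕ), (i : ℕ)) ω := by
    intro ω
    rw [Matrix.det_apply]
    refine Finset.sum_congr rfl fun σ _ => ?_
    simp [Units.smul_def, zsmul_eq_mul]
  have hdet1 : ∀ ω, Matrix.det ((Matrix.of fun i j : Fin (m + 2) =>
        X ((i : ℕ), (j : ℕ)) ω).submatrix
        (0 : Fin (m + 2)).succAbove (0 : Fin (m + 2)).succAbove)
      = ∑ α : Equiv.Perm (Fin (m + 1)),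
          ((Equiv.Perm.sign α : ℤ) : ℝ) * ∏ b, X ((α b : ℕ) + 1, (b : ℕ) + 1) ω := by
    intro ω
    rw [Matrix.det_apply]
    refine Finset.sum_congr rfl fun α _ => ?_
    simp [Units.smul_def, zsmul_eq_mul, Matrix.submatrix_apply, Fin.succAbove_zero, Fin.val_succ]
  have hdet2 : ∀ ω, Matrix.det ((Matrix.of fun i j : Fin (m + 2) =>
        X ((i : ℕ), (j : ℕ)) ω).submatrix
        (0 : Fin (m + 2)).succAbove (1 : Fin (m + 2)).succAbove)
      = ∑ β : Equiv.Perm (Fin (m + 1)),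
          ((Equiv.Perm.sign β : ℤ) : ℝ) *
            ∏ b, X ((β b : ℕ) + 1, ((1 : Fin (m + 2)).succAbove b : ℕ)) ω := by
    intro ω
    rw [Matrix.det_apply]
    refine Finset.sum_congr rfl fun β _ => ?_
    simp [Units.smul_def, zsmul_eq_mul, Matrix.submatrix_apply, Fin.succAbove_zero, Fin.val_succ]
  -- pointwise rewriting of the integrand
  have hrw : ∀ ω, (Matrix.det (Matrix.of fun i j : Fin (m + 2) => X ((i : ℕ), (j : ℕ)) ω)) ^ 2 *
        Matrix.det ((Matrix.of fun i j : Fin (m + 2) =>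
          X ((i : ℕ), (j : ℕ)) ω).submatrix
            (0 : Fin (m + 2)).succAbove (0 : Fin (m + 2)).succAbove) *
        Matrix.det ((Matrix.of fun i j : Fin (m + 2) =>
          X ((i : ℕ), (j : ℕ)) ω).submatrix
            (0 : Fin (m + 2)).succAbove (1 : Fin (m + 2)).succAbove)
      = ∑ β : Equiv.Perm (Fin (m + 1)), ∑ α : Equiv.Perm (Fin (m + 1)),
          ∑ τ : Equiv.Perm (Fin (m + 2)), ∑ σ : Equiv.Perm (Fin (m + 2)),
          (((Equiv.Perm.sign σ : ℤ) : ℝ) * ((Equiv.Perm.sign τ : ℤ) : ℝ) *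
            ((Equiv.Perm.sign α : ℤ) : ℝ) * ((Equiv.Perm.sign β : ℤ) : ℝ)) *
            ∏ p ∈ U σ τ α β, X p ω ^ D σ τ α β p := by
    intro ω
    rw [sq, hdetB ω, hdet1 ω, hdet2 ω]
    simp only [Finset.sum_mul, Finset.mul_sum]
    refine Finset.sum_congr rfl fun β _ => ?_
    refine Finset.sum_congr rfl fun α _ => ?_
    refine Finset.sum_congr rfl fun τ _ => ?_
    refine Finset.sum_congr rfl fun σ _ => ?_
    have hp4 : (∏ i, X ((σ i : ℕ), (i : ℕ)) ω) * (∏ i, X ((τ i : ℕ), (i : ℕ)) ω) *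
        (∏ b, X ((α b : ℕ) + 1, (b : ℕ) + 1) ω) *
        (∏ b, X ((β b : ℕ) + 1, ((1 : Fin (m + 2)).succAbove b : ℕ)) ω)
        = ∏ p ∈ U σ τ α β, X p ω ^ D σ τ α β p :=
      prod_four _ _ _ _ (fun p => X p ω)
    rw [← hp4]
    ring
  -- degrees are at most 4
  have hd4 : ∀ σ τ α β p, D σ τ α β p ≤ 4 := by
    intro σ τ α β p
    have h1 := card_fiber_le_one _ (inj_perm_pair σ) p
    have h2 := card_fiber_le_one _ (inj_perm_pair τ) p
    have h3 := card_fiber_le_one _ (inj_perm_pair3 α) p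
    have h4 := card_fiber_le_one _ (inj_perm_pair4 β) p
    simp only [D]
    omega
  -- each term is integrable
  have hterm : ∀ σ τ α β, Integrable (fun ω =>
      (((Equiv.Perm.sign σ : ℤ) : ℝ) * ((Equiv.Perm.sign τ : ℤ) : ℝ) *
        ((Equiv.Perm.sign α : ℤ) : ℝ) * ((Equiv.Perm.sign β : ℤ) : ℝ)) *
        ∏ p ∈ U σ τ α β, X p ω ^ D σ τ α β p) ℙ := by
    intro σ τ α β
    exact ((integral_prod_pow X hmeas hindep hint (D σ τ α β) (hd4 σ τ α β)
      (U σ τ α β)).1).const_mul _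
  -- each term has zero integral
  have hzero : ∀ σ τ α β, (∫ ω, ∏ p ∈ U σ τ α β, X p ω ^ D σ τ α β p) = 0 := by
    intro σ τ α β
    obtain ⟨p₀, hmem, hdeg⟩ := exists_deg_one m σ τ α β
    rw [(integral_prod_pow X hmeas hindep hint (D σ τ α β) (hd4 σ τ α β) (U σ τ α β)).2]
    refine Finset.prod_eq_zero hmem ?_
    have hD1 : D σ τ α β p₀ = 1 := hdeg
    rw [hD1]
    simpa using hzero1 p₀
  calc (∫ ω, (Matrix.det (Matrix.of fun i j : Fin (m + 2) => X ((i : ℕ), (j : ℕ)) ω)) ^ 2 *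
        Matrix.det ((Matrix.of fun i j : Fin (m + 2) =>
          X ((i : ℕ), (j : ℕ)) ω).submatrix
            (0 : Fin (m + 2)).succAbove (0 : Fin (m + 2)).succAbove) *
        Matrix.det ((Matrix.of fun i j : Fin (m + 2) =>
          X ((i : ℕ), (j : ℕ)) ω).submatrix
            (0 : Fin (m + 2)).succAbove (1 : Fin (m + 2)).succAbove))
      = ∫ ω, ∑ β : Equiv.Perm (Fin (m + 1)), ∑ α : Equiv.Perm (Fin (m + 1)),
          ∑ τ : Equiv.Perm (Fin (m + 2)), ∑ σ : Equiv.Perm (Fin (m + 2)),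
          (((Equiv.Perm.sign σ : ℤ) : ℝ) * ((Equiv.Perm.sign τ : ℤ) : ℝ) *
            ((Equiv.Perm.sign α : ℤ) : ℝ) * ((Equiv.Perm.sign β : ℤ) : ℝ)) *
            ∏ p ∈ U σ τ α β, X p ω ^ D σ τ α β p :=
        integral_congr_ae (Filter.Eventually.of_forall hrw)
    _ = 0 := by
        rw [integral_finset_sum _ fun β _ => integrable_finset_sum _ fun α _ =>
          integrable_finset_sum _ fun τ _ => integrable_finset_sum _ fun σ _ => hterm σ τ α β]
        refine Finset.sum_eq_zero fun β _ => ?_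
        rw [integral_finset_sum _ fun α _ => integrable_finset_sum _ fun τ _ =>
          integrable_finset_sum _ fun σ _ => hterm σ τ α β]
        refine Finset.sum_eq_zero fun α _ => ?_
        rw [integral_finset_sum _ fun τ _ => integrable_finset_sum _ fun σ _ => hterm σ τ α β]
        refine Finset.sum_eq_zero fun τ _ => ?_
        rw [integral_finset_sum _ fun σ _ => hterm σ τ α β]
        refine Finset.sum_eq_zero fun σ _ => ?_
        rw [integral_const_mul, hzero σ τ α β, mul_zero]
end

section
/- Let X_{ij} be i.i.d. centered random variables with finite fourth moment and B = (X_{ij})_{n×n} for n ≥ 4. Then E[det(B_{11}) · det(B_{12}) · det(B_{13}) · det(B_{14})] = 0, where B_{1k} is B with row 1 and column k deleted. -/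
/-!
Expanding each minor over permutations turns `E[∏ₖ det B₁ₖ]` into a signed sum of expectations of
monomials in the entries of `B`. An entry occurs at most once in each minor, hence at most four
times in a monomial, so the fourth moment makes every monomial integrable. Each monomial also
contains some entry exactly once, and then independence and centering kill its expectation.
To find that entry, look at column 1 of `B`, which the minors `B₁₂, B₁₃, B₁₄` use and `B₁₁`
deletes. If one of the three rows used there is used by only one of these minors, that entry is
isolated. Otherwise all three use the same row `r` in column 1, and the entry of `B₁₁` in row `r`
is isolated, because the other minors spend row `r` on column 1.
-/

open MeasureTheory ProbabilityTheory Nat Finset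
open scoped ENNReal

theorem MeasureTheory.MemLp.integrable_pow_of_le {Ω : Type*} [MeasurableSpace Ω] {μ : Measure Ω}
    [IsFiniteMeasure μ] {f : Ω → ℝ} {q j : ℕ} (hf : MemLp f q μ) (hj : j ≤ q) :
    Integrable (f ^ j) μ := by
  refine (integrable_norm_iff (hf.1.pow j)).1 ?_
  simpa [norm_pow] using integrable_norm_pow_of_le hf.1 hj hf.integrable_norm_pow'

namespace ProbabilityTheory

variable {Ω ι α : Type*} [MeasurableSpace Ω] {μ : Measure Ω} {X : ι → Ω → ℝ}

theorem iIndepFun.integrable_finset_prod (hX : iIndepFun X μ) (hm : ∀ i, Measurable (X i))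
    {s : Finset ι} (hs : ∀ i ∈ s, Integrable (X i) μ) :
    Integrable (fun ω ↦ ∏ i ∈ s, X i ω) μ := by
  refine ⟨s.aestronglyMeasurable_fun_prod fun i _ ↦ (hm i).aestronglyMeasurable, ?_⟩
  simp only [HasFiniteIntegral, enorm_eq_nnnorm, nnnorm_prod, ENNReal.ofNNReal_finsetProd]
  rw [lintegral_prod_eq_prod_lintegral_of_indepFun s (fun i ω ↦ ‖X i ω‖₊)
    (hX.comp (fun _ x ↦ (‖x‖₊ : ℝ≥0∞)) fun _ ↦ by fun_prop) fun i ↦ by fun_prop]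
  exact ENNReal.prod_lt_top fun i hi ↦ (hs i hi).2

theorem iIndepFun.integral_finset_prod (hX : iIndepFun X μ) (hm : ∀ i, Measurable (X i))
    (s : Finset ι) : ∫ ω, ∏ i ∈ s, X i ω ∂μ = ∏ i ∈ s, ∫ ω, X i ω ∂μ := by
  have := (hX.precomp Subtype.val_injective).integral_fun_prod_eq_prod_integral
    fun i : s ↦ (hm i).aestronglyMeasurable
  simpa only [← prod_coe_sort s] using this

variable [DecidableEq ι] [Fintype α]

theorem iIndepFun.integrable_prod_comp (hX : iIndepFun X μ) (hm : ∀ i, Measurable (X i))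
    {q : ℕ} (hq : ∀ i, MemLp (X i) q μ) (F : α → ι) (hF : ∀ a, #{b | F b = F a} ≤ q) :
    Integrable (fun ω ↦ ∏ a, X (F a) ω) μ := by
  have := hX.isProbabilityMeasure
  simp only [fun ω ↦ prod_comp (s := univ) (fun i ↦ X i ω) F]
  refine (hX.comp (fun i x ↦ x ^ #{a | F a = i}) fun _ ↦ by fun_prop).integrable_finset_prod
    (fun i ↦ (hm i).pow_const _) fun i hi ↦ ?_
  obtain ⟨a, -, rfl⟩ := mem_image.1 hi
  exact (hq _).integrable_pow_of_le (hF a)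

theorem iIndepFun.integral_prod_comp_eq_zero (hX : iIndepFun X μ) (hm : ∀ i, Measurable (X i))
    (F : α → ι) {a₀ : α} (ha₀ : ∀ a, F a = F a₀ → a = a₀) (hmean : ∫ ω, X (F a₀) ω ∂μ = 0) :
    ∫ ω, ∏ a, X (F a) ω ∂μ = 0 := by
  simp only [fun ω ↦ prod_comp (s := univ) (fun i ↦ X i ω) F]
  rw [iIndepFun.integral_finset_prod (X := fun i ω ↦ X i ω ^ #{a | F a = i})
    (hX.comp (fun i x ↦ x ^ #{a | F a = i}) fun _ ↦ by fun_prop) fun i ↦ (hm i).pow_const _]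
  refine prod_eq_zero (mem_image_of_mem F (mem_univ a₀)) ?_
  have hsingle : #{a | F a = F a₀} = 1 :=
    card_eq_one.2 ⟨a₀, by ext a; simpa using ⟨ha₀ a, congrArg F⟩⟩
  simpa [hsingle] using hmean

end ProbabilityTheory

theorem Matrix.prod_det_eq_sum {κ n R : Type*} [Fintype κ] [DecidableEq κ] [Fintype n]
    [DecidableEq n] [CommRing R] (M : κ → Matrix n n R) :
    ∏ k, (M k).det = ∑ g : κ → Equiv.Perm n,
      (∏ k, ((Equiv.Perm.sign (g k) : ℤ) : R)) * ∏ a : κ × n, M a.1 (g a.1 a.2) a.2 := by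
  simp_rw [Matrix.det_apply', Fintype.prod_sum, Fintype.prod_prod_type, prod_mul_distrib]

theorem card_fiber_le_card_of_injective_snd {κ n β : Type*} [Fintype κ] [Fintype n]
    [DecidableEq β] (F : κ × n → β) (hF : ∀ k, Function.Injective fun i ↦ F (k, i)) (y : β) :
    #{a | F a = y} ≤ Fintype.card κ := by
  refine (card_le_card_of_injOn Prod.fst (fun _ _ ↦ mem_coe.2 (mem_univ _)) ?_).trans_eq card_univ
  rintro ⟨k, i⟩ hi ⟨l, j⟩ hj (rfl : k = l)
  simp only [coe_filter, mem_univ, true_and, Set.mem_ofPred_eq] at hi hj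
  rw [hF k (hi.trans hj.symm)]

theorem fin_three_const_or_exists_isolated {β : Type*} (v : Fin 3 → β) :
    (∀ k, v k = v 0) ∨ ∃ k, ∀ l, v l = v k → l = k := by
  by_cases h₁ : v 1 = v 0 <;> by_cases h₂ : v 2 = v 0
  · exact .inl fun k ↦ by fin_cases k <;> simp_all
  · exact .inr ⟨2, fun l hl ↦ by fin_cases l <;> simp_all⟩
  · exact .inr ⟨1, fun l hl ↦ by fin_cases l <;> simp_all⟩
  · exact .inr ⟨0, fun l hl ↦ by fin_cases l <;> simp_all⟩

/-- The `k`-th minor deletes column `c k` of an `N × (N + 1)` matrix; in its permutation term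
`g k`, the factor indexed by `i` is the entry in row `g k i` and column `(c k).succAbove i`. -/
theorem exists_isolated_minor_entry {N : ℕ} (c : Fin 4 → Fin (N + 1))
    (hc : Function.Injective c) (g : Fin 4 → Equiv.Perm (Fin N)) :
    ∃ a₀ : Fin 4 × Fin N, ∀ a : Fin 4 × Fin N,
      (g a.1 a.2, (c a.1).succAbove a.2) = (g a₀.1 a₀.2, (c a₀.1).succAbove a₀.2) → a = a₀ := by
  have hz : ∀ k : Fin 3, ∃ z, (c k.succ).succAbove z = c 0 :=
    fun k ↦ Fin.exists_succAbove_eq (hc.ne (Fin.succ_ne_zero k).symm)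
  choose z hz using hz
  have col_zero : ∀ a : Fin 4 × Fin N, (c a.1).succAbove a.2 = c 0 → ∃ k, a = (k.succ, z k) := by
    rintro ⟨k, i⟩ (h : (c k).succAbove i = c 0)
    cases k using Fin.cases with
    | zero => exact absurd h (Fin.succAbove_ne _ _)
    | succ k => exact ⟨k, by rw [Fin.succAbove_right_injective (h.trans (hz k).symm)]⟩
  rcases fin_three_const_or_exists_isolated (fun k ↦ g k.succ (z k)) with hconst | ⟨k, hk⟩
  · refine ⟨(0, (g 0).symm (g 1 (z 0))), fun ⟨l, i⟩ h ↦ ?_⟩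
    simp only [Prod.mk.injEq, Equiv.apply_symm_apply] at h
    cases l using Fin.cases with
    | zero => rw [← h.1, Equiv.symm_apply_apply]
    | succ l =>
      have hi : i = z l := (g l.succ).injective (h.1.trans (hconst l).symm)
      rw [hi, hz] at h
      exact absurd h.2 (Fin.succAbove_ne _ _).symm
  · refine ⟨(k.succ, z k), fun a h ↦ ?_⟩
    simp only [Prod.mk.injEq, hz] at h
    obtain ⟨l, rfl⟩ := col_zero a h.2
    rw [hk l h.1]

theorem expectation_prod_first_row_minors_general
    {Ω : Type*} [MeasureSpace Ω]
    (m : ℕ) (X : ℕ × ℕ → Ω → ℝ)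
    (hmeas : ∀ p, Measurable (X p))
    (hindep : iIndepFun X ℙ)
    (hident : ∀ p, Measure.map (X p) ℙ = Measure.map (X (0, 0)) ℙ)
    (hcent : (∫ ω, X (0, 0) ω) = 0)
    (hmom4 : Integrable (fun ω => (X (0, 0) ω) ^ 4) ℙ) :
    (∫ ω,
        Matrix.det ((Matrix.of fun i j : Fin (m + 4) =>
          X ((i : ℕ), (j : ℕ)) ω).submatrix
            (0 : Fin (m + 4)).succAbove (0 : Fin (m + 4)).succAbove) *
        Matrix.det ((Matrix.of fun i j : Fin (m + 4) =>
          X ((i : ℕ), (j : ℕ)) ω).submatrix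
            (0 : Fin (m + 4)).succAbove (1 : Fin (m + 4)).succAbove) *
        Matrix.det ((Matrix.of fun i j : Fin (m + 4) =>
          X ((i : ℕ), (j : ℕ)) ω).submatrix
            (0 : Fin (m + 4)).succAbove (2 : Fin (m + 4)).succAbove) *
        Matrix.det ((Matrix.of fun i j : Fin (m + 4) =>
          X ((i : ℕ), (j : ℕ)) ω).submatrix
            (0 : Fin (m + 4)).succAbove (3 : Fin (m + 4)).succAbove)) = 0 := by
  have hdist : ∀ p, IdentDistrib (X p) (X (0, 0)) ℙ ℙ :=
    fun p ↦ ⟨(hmeas p).aemeasurable, (hmeas _).aemeasurable, hident p⟩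
  have hLp : ∀ p, MemLp (X p) (4 : ℕ) ℙ := fun p ↦ by
    rw [(hdist p).memLp_iff, ← integrable_norm_rpow_iff (hmeas _).aestronglyMeasurable
      (by norm_num) (by norm_num)]
    simpa only [ENNReal.toReal_natCast, Real.rpow_natCast, norm_pow] using hmom4.norm
  have hmean : ∀ p, ∫ ω, X p ω = 0 := fun p ↦ (hdist p).integral_eq.trans hcent
  let c : Fin 4 → Fin (m + 4) := Fin.castLE (by omega)
  have hc : c 1 = 1 ∧ c 2 = 2 ∧ c 3 = 3 := by
    refine ⟨?_, ?_, ?_⟩ <;> ext <;>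
      simp [c, Nat.mod_eq_of_lt (show 2 < m + 4 by omega),
        Nat.mod_eq_of_lt (show 3 < m + 4 by omega)]
  let e : Fin (m + 3) × Fin (m + 4) → ℕ × ℕ := fun p ↦ ((Fin.succAbove 0 p.1 : ℕ), p.2)
  have he : Function.Injective e :=
    (Fin.val_injective.comp Fin.succAbove_right_injective).prodMap Fin.val_injective
  let entry (g : Fin 4 → Equiv.Perm (Fin (m + 3))) (a : Fin 4 × Fin (m + 3)) : ℕ × ℕ :=
    e (g a.1 a.2, (c a.1).succAbove a.2)
  have hint : ∀ g, Integrable (fun ω ↦ ∏ a, X (entry g a) ω) ℙ := fun g ↦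
    hindep.integrable_prod_comp hmeas hLp (entry g) fun a ↦
      (card_fiber_le_card_of_injective_snd (entry g)
        (fun k ↦ he.comp fun i j h ↦ (g k).injective (congrArg Prod.fst h)) _).trans_eq
        (Fintype.card_fin 4)
  calc _ = ∫ ω, ∏ k, ((Matrix.of fun i j : Fin (m + 4) => X ((i : ℕ), (j : ℕ)) ω).submatrix
              (0 : Fin (m + 4)).succAbove (c k).succAbove).det := by
        simp [Fin.prod_univ_four, hc, c]
    _ = ∫ ω, ∑ g, (∏ k, ((Equiv.Perm.sign (g k) : ℤ) : ℝ)) * ∏ a, X (entry g a) ω := by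
        simp_rw [Matrix.prod_det_eq_sum]; rfl
    _ = ∑ g, (∏ k, ((Equiv.Perm.sign (g k) : ℤ) : ℝ)) * ∫ ω, ∏ a, X (entry g a) ω := by
        rw [integral_finsetSum _ fun g _ ↦ (hint g).const_mul _]
        simp_rw [integral_const_mul]
    _ = 0 := sum_eq_zero fun g _ ↦ by
        obtain ⟨a₀, ha₀⟩ := exists_isolated_minor_entry c (Fin.castLE_injective _) g
        rw [hindep.integral_prod_comp_eq_zero hmeas (entry g) (fun a h ↦ ha₀ a (he h)) (hmean _),
          mul_zero]

/-- For i.i.d. centered entries with finite fourth moment and `B` of size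
`n × n` with `n ≥ 4` (here `n = m + 4`),
`E[det(B₁₁) det(B₁₂) det(B₁₃) det(B₁₄)] = 0`. -/
theorem expectation_prod_first_row_minors
    {Ω : Type*} [MeasureSpace Ω] [IsProbabilityMeasure (ℙ : Measure Ω)]
    (m : ℕ) (X : ℕ × ℕ → Ω → ℝ)
    (hmeas : ∀ p, Measurable (X p))
    (hindep : iIndepFun X ℙ)
    (hident : ∀ p, Measure.map (X p) ℙ = Measure.map (X (0, 0)) ℙ)
    (hcent : (∫ ω, X (0, 0) ω) = 0)
    (hmom4 : Integrable (fun ω => (X (0, 0) ω) ^ 4) ℙ) :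
    (∫ ω,
        Matrix.det ((Matrix.of fun i j : Fin (m + 4) =>
          X ((i : ℕ), (j : ℕ)) ω).submatrix
            (0 : Fin (m + 4)).succAbove (0 : Fin (m + 4)).succAbove) *
        Matrix.det ((Matrix.of fun i j : Fin (m + 4) =>
          X ((i : ℕ), (j : ℕ)) ω).submatrix
            (0 : Fin (m + 4)).succAbove (1 : Fin (m + 4)).succAbove) *
        Matrix.det ((Matrix.of fun i j : Fin (m + 4) =>
          X ((i : ℕ), (j : ℕ)) ω).submatrix
            (0 : Fin (m + 4)).succAbove (2 : Fin (m + 4)).succAbove) *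
        Matrix.det ((Matrix.of fun i j : Fin (m + 4) =>
          X ((i : ℕ), (j : ℕ)) ω).submatrix
            (0 : Fin (m + 4)).succAbove (3 : Fin (m + 4)).succAbove)) = 0 :=
  expectation_prod_first_row_minors_general m X hmeas hindep hident hcent hmom4
end

section
/- Define formal power series in t: G(t) with G(t) = ∑ gₙ tⁿ/(n!)², and suppose real sequences h₀, h₉, h₁₀ satisfy h₀(n) = μ₂·g(n-1) + (n-1)²μ₂²·h₀(n-1), h₉(n) = μ₂·h₀(n-1) + (n-2)²μ₂³·h₀(n-2) + (n-2)²μ₂²·h₉(n-1), h₁₀(n) = (n-2)²μ₂³·h₀(n-2) + (n-2)²μ₂²·h₁₀(n-1), with h₀(0)=h₉(0)=h₉(1)=h₁₀(0)=h₁₀(1)=0. Then the generating functions H₀(t) = ∑ n²h₀(n)tⁿ/(n!)², H₉(t) = ∑ n²(n-1)²h₉(n)tⁿ/(n!)², H₁₀(t) = ∑ n²(n-1)²h₁₀(n)tⁿ/(n!)² satisfy H₀(t) = μ₂ t G(t)/(1-μ₂²t), H₉(t) = μ₂²t²(1+μ₂²t)G(t)/(1-μ₂²t)², H₁₀(t)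 = μ₂⁴t³ G(t)/(1-μ₂²t)². -/
open Nat PowerSeries

/-!
Since `n² / (n!)² = 1 / ((n-1)!)²`, the weight `n²` in `H₀` cancels against the factorials and the
recurrence for `h₀` becomes the coefficient relation `[tⁿ⁺¹] H₀ = μ₂² [tⁿ] H₀ + μ₂ [tⁿ] G`, that is
`H₀ (1 - μ₂² t) = μ₂ t G`. In the same way the recurrences for `h₉` and `h₁₀` give
`H₉ (1 - μ₂² t) = t (μ₂ + μ₂³ t) H₀` and `H₁₀ (1 - μ₂² t) = μ₂³ t² H₀`; multiplying these by
`1 - μ₂² t` and substituting the first identity yields the claim.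
-/

theorem PowerSeries.mul_one_sub_C_mul_X_eq_X_mul {R : Type*} [CommRing R] {a : R}
    {f p : R⟦X⟧} (h0 : coeff 0 f = 0)
    (hsucc : ∀ n, coeff (n + 1) f = a * coeff n f + coeff n p) :
    f * (1 - C a * X) = X * p := by
  ext (_ | n)
  · simpa using h0
  · rw [mul_sub, mul_one, mul_left_comm, map_sub, coeff_C_mul, coeff_succ_mul_X,
      coeff_succ_X_mul, hsucc]
    ring

section FactorialSqGF

variable {K : Type*} [Field K]

def factorialSqGF (c : ℕ → K) : K⟦X⟧ :=
  mk fun n => c n / (n ! : K) ^ 2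

@[simp]
theorem coeff_factorialSqGF (c : ℕ → K) (n : ℕ) :
    coeff n (factorialSqGF c) = c n / (n ! : K) ^ 2 :=
  coeff_mk _ _

variable [CharZero K]

theorem coeff_succ_factorialSqGF_sq_mul (c : ℕ → K) (n : ℕ) :
    coeff (n + 1) (factorialSqGF fun k => (k : K) ^ 2 * c k) = c (n + 1) / (n ! : K) ^ 2 := by
  rw [coeff_factorialSqGF, factorial_succ]
  push_cast
  field_simp

variable {μ : K} {g h₀ h₉ h₁₀ : ℕ → K}

theorem factorialSqGF_h₀_mul_one_sub
    (rec₀ : ∀ n, 1 ≤ n → h₀ n = μ * g (n - 1) + ((n : K) - 1) ^ 2 * μ ^ 2 * h₀ (n - 1)) :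
    (factorialSqGF fun n => (n : K) ^ 2 * h₀ n) * (1 - C (μ ^ 2) * X) =
      X * (C μ * factorialSqGF g) := by
  refine mul_one_sub_C_mul_X_eq_X_mul (by simp) fun n => ?_
  rw [coeff_succ_factorialSqGF_sq_mul, rec₀ (n + 1) n.succ_pos, coeff_C_mul]
  simp only [coeff_factorialSqGF, add_tsub_cancel_right, cast_add, cast_one]
  ring

theorem factorialSqGF_h₉_mul_one_sub
    (rec₉ : ∀ n, 2 ≤ n → h₉ n = μ * h₀ (n - 1) + ((n : K) - 2) ^ 2 * μ ^ 3 * h₀ (n - 2) +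
      ((n : K) - 2) ^ 2 * μ ^ 2 * h₉ (n - 1)) :
    (factorialSqGF fun n => (n : K) ^ 2 * (((n : K) - 1) ^ 2 * h₉ n)) * (1 - C (μ ^ 2) * X) =
      X * (C μ * factorialSqGF (fun n => (n : K) ^ 2 * h₀ n) +
        C (μ ^ 3) * (X * factorialSqGF fun n => (n : K) ^ 2 * h₀ n)) := by
  refine mul_one_sub_C_mul_X_eq_X_mul (by simp) fun n => ?_
  rcases n with _ | n
  · rw [map_add, coeff_C_mul, coeff_C_mul, coeff_zero_X_mul]
    simp
  rw [coeff_succ_factorialSqGF_sq_mul, coeff_succ_factorialSqGF_sq_mul, rec₉ (n + 2) (by omega),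
    map_add, coeff_C_mul, coeff_C_mul, coeff_succ_X_mul, coeff_succ_factorialSqGF_sq_mul]
  simp only [coeff_factorialSqGF, add_tsub_cancel_right, cast_add, cast_one, factorial_succ]
  push_cast
  field_simp
  ring

theorem factorialSqGF_h₁₀_mul_one_sub
    (rec₁₀ : ∀ n, 2 ≤ n → h₁₀ n = ((n : K) - 2) ^ 2 * μ ^ 3 * h₀ (n - 2) +
      ((n : K) - 2) ^ 2 * μ ^ 2 * h₁₀ (n - 1)) :
    (factorialSqGF fun n => (n : K) ^ 2 * (((n : K) - 1) ^ 2 * h₁₀ n)) * (1 - C (μ ^ 2) * X) =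
      X * (C (μ ^ 3) * (X * factorialSqGF fun n => (n : K) ^ 2 * h₀ n)) := by
  refine mul_one_sub_C_mul_X_eq_X_mul (by simp) fun n => ?_
  rcases n with _ | n
  · rw [coeff_C_mul, coeff_zero_X_mul]
    simp
  rw [coeff_succ_factorialSqGF_sq_mul, coeff_succ_factorialSqGF_sq_mul,
    rec₁₀ (n + 2) (by omega), coeff_C_mul, coeff_succ_X_mul]
  simp only [coeff_factorialSqGF, add_tsub_cancel_right, cast_add, cast_one, factorial_succ]
  push_cast
  field_simp
  ring

end FactorialSqGF

theorem aux_generating_functions_general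
    (μ₂ : ℝ) (g h₀ h₉ h₁₀ : ℕ → ℝ)
    (rec₀ : ∀ n, 1 ≤ n →
      h₀ n = μ₂ * g (n - 1) + ((n : ℝ) - 1) ^ 2 * μ₂ ^ 2 * h₀ (n - 1))
    (rec₉ : ∀ n, 2 ≤ n →
      h₉ n = μ₂ * h₀ (n - 1) + ((n : ℝ) - 2) ^ 2 * μ₂ ^ 3 * h₀ (n - 2) +
        ((n : ℝ) - 2) ^ 2 * μ₂ ^ 2 * h₉ (n - 1))
    (rec₁₀ : ∀ n, 2 ≤ n →
      h₁₀ n = ((n : ℝ) - 2) ^ 2 * μ₂ ^ 3 * h₀ (n - 2) +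
        ((n : ℝ) - 2) ^ 2 * μ₂ ^ 2 * h₁₀ (n - 1))
    (G H₀ H₉ H₁₀ : PowerSeries ℝ)
    (hG : G = PowerSeries.mk fun n => g n / (n ! : ℝ) ^ 2)
    (hH₀ : H₀ = PowerSeries.mk fun n => (n : ℝ) ^ 2 * h₀ n / (n ! : ℝ) ^ 2)
    (hH₉ : H₉ = PowerSeries.mk fun n =>
      (n : ℝ) ^ 2 * ((n : ℝ) - 1) ^ 2 * h₉ n / (n ! : ℝ) ^ 2)
    (hH₁₀ : H₁₀ = PowerSeries.mk fun n =>
      (n : ℝ) ^ 2 * ((n : ℝ) - 1) ^ 2 * h₁₀ n / (n ! : ℝ) ^ 2) :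
    H₀ * (1 - PowerSeries.C (μ₂ ^ 2) * PowerSeries.X) =
        PowerSeries.C μ₂ * PowerSeries.X * G ∧
    H₉ * (1 - PowerSeries.C (μ₂ ^ 2) * PowerSeries.X) ^ 2 =
        PowerSeries.C (μ₂ ^ 2) * PowerSeries.X ^ 2 *
          (1 + PowerSeries.C (μ₂ ^ 2) * PowerSeries.X) * G ∧
    H₁₀ * (1 - PowerSeries.C (μ₂ ^ 2) * PowerSeries.X) ^ 2 =
        PowerSeries.C (μ₂ ^ 4) * PowerSeries.X ^ 3 * G := by
  have hH₉' : H₉ = factorialSqGF fun n => (n : ℝ) ^ 2 * (((n : ℝ) - 1) ^ 2 * h₉ n) := by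
    simp only [hH₉, factorialSqGF, mul_assoc]
  have hH₁₀' : H₁₀ = factorialSqGF fun n => (n : ℝ) ^ 2 * (((n : ℝ) - 1) ^ 2 * h₁₀ n) := by
    simp only [hH₁₀, factorialSqGF, mul_assoc]
  have step₀ : H₀ * (1 - C (μ₂ ^ 2) * X) = X * (C μ₂ * G) := by
    rw [hH₀, hG]; exact factorialSqGF_h₀_mul_one_sub rec₀
  have step₉ : H₉ * (1 - C (μ₂ ^ 2) * X) = X * (C μ₂ * H₀ + C (μ₂ ^ 3) * (X * H₀)) := by
    rw [hH₉', hH₀]; exact factorialSqGF_h₉_mul_one_sub rec₉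
  have step₁₀ : H₁₀ * (1 - C (μ₂ ^ 2) * X) = X * (C (μ₂ ^ 3) * (X * H₀)) := by
    rw [hH₁₀', hH₀]; exact factorialSqGF_h₁₀_mul_one_sub rec₁₀
  simp only [map_pow] at step₀ step₉ step₁₀ ⊢
  refine ⟨by linear_combination step₀, ?_, ?_⟩
  · linear_combination (1 - C μ₂ ^ 2 * X) * step₉ + X * (C μ₂ + C μ₂ ^ 3 * X) * step₀
  · linear_combination (1 - C μ₂ ^ 2 * X) * step₁₀ + C μ₂ ^ 3 * X ^ 2 * step₀

/-- Solving the recurrences for `h₀, h₉, h₁₀` in terms of generating functions: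
`H₀ = μ₂ t G/(1-μ₂²t)`, `H₉ = μ₂²t²(1+μ₂²t)G/(1-μ₂²t)²`,
`H₁₀ = μ₂⁴t³G/(1-μ₂²t)²` (stated multiplied through by the denominators). -/
theorem aux_generating_functions
    (μ₂ : ℝ) (g h₀ h₉ h₁₀ : ℕ → ℝ)
    (rec₀ : ∀ n, 1 ≤ n →
      h₀ n = μ₂ * g (n - 1) + ((n : ℝ) - 1) ^ 2 * μ₂ ^ 2 * h₀ (n - 1))
    (rec₉ : ∀ n, 2 ≤ n →
      h₉ n = μ₂ * h₀ (n - 1) + ((n : ℝ) - 2) ^ 2 * μ₂ ^ 3 * h₀ (n - 2) +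
        ((n : ℝ) - 2) ^ 2 * μ₂ ^ 2 * h₉ (n - 1))
    (rec₁₀ : ∀ n, 2 ≤ n →
      h₁₀ n = ((n : ℝ) - 2) ^ 2 * μ₂ ^ 3 * h₀ (n - 2) +
        ((n : ℝ) - 2) ^ 2 * μ₂ ^ 2 * h₁₀ (n - 1))
    (init₀ : h₀ 0 = 0) (init₉ : h₉ 0 = 0) (init₉' : h₉ 1 = 0)
    (init₁₀ : h₁₀ 0 = 0) (init₁₀' : h₁₀ 1 = 0)
    (G H₀ H₉ H₁₀ : PowerSeries ℝ)
    (hG : G = PowerSeries.mk fun n => g n / (n ! : ℝ) ^ 2)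
    (hH₀ : H₀ = PowerSeries.mk fun n => (n : ℝ) ^ 2 * h₀ n / (n ! : ℝ) ^ 2)
    (hH₉ : H₉ = PowerSeries.mk fun n =>
      (n : ℝ) ^ 2 * ((n : ℝ) - 1) ^ 2 * h₉ n / (n ! : ℝ) ^ 2)
    (hH₁₀ : H₁₀ = PowerSeries.mk fun n =>
      (n : ℝ) ^ 2 * ((n : ℝ) - 1) ^ 2 * h₁₀ n / (n ! : ℝ) ^ 2) :
    H₀ * (1 - PowerSeries.C (μ₂ ^ 2) * PowerSeries.X) =
        PowerSeries.C μ₂ * PowerSeries.X * G ∧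
    H₉ * (1 - PowerSeries.C (μ₂ ^ 2) * PowerSeries.X) ^ 2 =
        PowerSeries.C (μ₂ ^ 2) * PowerSeries.X ^ 2 *
          (1 + PowerSeries.C (μ₂ ^ 2) * PowerSeries.X) * G ∧
    H₁₀ * (1 - PowerSeries.C (μ₂ ^ 2) * PowerSeries.X) ^ 2 =
        PowerSeries.C (μ₂ ^ 4) * PowerSeries.X ^ 3 * G :=
  aux_generating_functions_general μ₂ g h₀ h₉ h₁₀ rec₀ rec₉ rec₁₀ G H₀ H₉ H₁₀ hG hH₀ hH₉ hH₁₀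
end

section
/- Let the formal power series F(t,ω) = e^{t(m₄-3m₂²)} / ((1-m₂²t)²(1-ω-m₂²t)). Then the coefficient of tᵖωⁿ⁻ᵖ·(n-p)!/(n!·p!) expansion gives f(n,p) = p!²·C(n,p)·m₂^{2p}·∑_{j=0}^{p} (1/j!)·(m₄/m₂² - 3)ʲ·C(n-j+2, n-p+2); equivalently, ∑_{n≥0}∑_{p=0}^{n} ((n-p)!/(n!·p!))·tᵖ·ωⁿ⁻ᵖ·p!²·C(n,p)·m₂^{2p}·∑_{j=0}^{p}(1/j!)·(m₄/m₂²-3)ʲ·C(n-j+2,n-p+2) = e^{t(m₄-3m₂²)}/((1-m₂²t)²(1-ω-m₂²t)). -/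
/-!
Put `x = m₂² t` and `a = m₄ / m₂² - 3`. The normalising factor `(n-p)!/(n! p!) · p!² C(n,p)`
is `1`, so the `n`-th term is the sum of `(a x)^j / j! · C(q+i+2, q+2) ω^q x^i` over
`j + q + i = n` (with `p = j + i`, `q = n - p`). This is the `n`-th Cauchy coefficient of
`exp (a x)` times the double series `∑ C(q+i+2, q+2) ω^q x^i` summed along antidiagonals.
Summing that double series over `i` first gives `ω^q / (1-x)^(q+3)` (negative binomial series)
and then over `q` a geometric series with value `1 / ((1-x)² (1-ω-x))`; for `|ω| + |x| < 1`
everything converges absolutely, which justifies the rearrangements.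
-/

open Nat Finset

theorem HasSum.sum_antidiagonal {A α : Type*} [AddCommMonoid A] [HasAntidiagonal A]
    [AddCommMonoid α] [TopologicalSpace α] [ContinuousAdd α] [RegularSpace α]
    {f : A × A → α} {a : α} (hf : HasSum f a) :
    HasSum (fun n ↦ ∑ kl ∈ antidiagonal n, f kl) a :=
  (HasAntidiagonal.sigmaAntidiagonalEquivProd.hasSum_iff.mpr hf).sigma fun n ↦ by
    simpa [sum_attach] using hasSum_fintype fun kl : antidiagonal n ↦ f kl

theorem sum_range_sum_range_eq_sum_antidiagonal_sum_antidiagonal {M : Type*} [AddCommMonoid M]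
    (n : ℕ) (f : ℕ → ℕ → ℕ → M) :
    ∑ p ∈ range (n + 1), ∑ j ∈ range (p + 1), f j (n - p) (p - j) =
      ∑ jm ∈ antidiagonal n, ∑ qi ∈ antidiagonal jm.2, f jm.1 qi.1 qi.2 := by
  rw [sum_sigma', sum_sigma']
  refine sum_nbij' (fun a ↦ ⟨(a.2, n - a.2), (n - a.1, a.1 - a.2)⟩)
    (fun b ↦ ⟨b.1.1 + b.2.2, b.1.1⟩) ?_ ?_ ?_ ?_ ?_ <;>
    simp only [mem_sigma, mem_range, HasAntidiagonal.mem_antidiagonal, Sigma.forall, Prod.forall,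
      Sigma.mk.injEq, Prod.mk.injEq, heq_eq_eq, and_true, true_and, implies_true] <;>
    omega

theorem sub_factorial_div_mul_sq_factorial_mul_choose {n p : ℕ} (hp : p ≤ n) :
    ((n - p)! : ℝ) / (n ! * p !) * ((p ! : ℝ) ^ 2 * n.choose p) = 1 := by
  have h : (n.choose p : ℝ) * p ! * (n - p)! = n ! := by
    exact_mod_cast choose_mul_factorial_mul_factorial hp
  have hchoose : (n.choose p : ℝ) ≠ 0 := by exact_mod_cast (choose_pos hp).ne'
  rw [← h]
  field_simp

namespace Dembo

def coeff (x w : ℝ) (qi : ℕ × ℕ) : ℝ :=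
  ((qi.1 + qi.2 + 2).choose (qi.1 + 2) : ℝ) * w ^ qi.1 * x ^ qi.2

variable {x w : ℝ}

theorem hasSum_coeff_snd (hx : |x| < 1) (q : ℕ) :
    HasSum (fun i ↦ coeff x w (q, i)) (w ^ q / (1 - x) ^ (q + 3)) := by
  have h := (hasSum_choose_mul_geometric_of_norm_lt_one (q + 2) (r := x) hx).mul_left (w ^ q)
  have hterm :
      (fun i ↦ coeff x w (q, i)) = fun i ↦ w ^ q * ((i + (q + 2)).choose (q + 2) * x ^ i) := by
    ext i
    rw [coeff, show q + i + 2 = i + (q + 2) by ring]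
    ring
  rwa [hterm, show w ^ q / (1 - x) ^ (q + 3) = w ^ q * (1 / (1 - x) ^ (q + 2 + 1)) by ring]

theorem hasSum_pow_div_one_sub_pow (hwx : |w| + |x| < 1) :
    HasSum (fun q : ℕ ↦ w ^ q / (1 - x) ^ (q + 3)) (1 / ((1 - x) ^ 2 * (1 - w - x))) := by
  have hx : 0 < 1 - x := by linarith [le_abs_self x, abs_nonneg w]
  have hwx' : 0 < 1 - w - x := by linarith [le_abs_self x, le_abs_self w]
  have hratio : ‖w / (1 - x)‖ < 1 := by
    rw [Real.norm_eq_abs, abs_div, abs_of_pos hx, div_lt_one hx]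
    linarith [le_abs_self x]
  have hterm : (fun q : ℕ ↦ w ^ q / (1 - x) ^ (q + 3)) =
      fun q ↦ 1 / (1 - x) ^ 3 * (w / (1 - x)) ^ q := by
    ext q
    rw [div_pow, pow_add]
    field_simp
  have hsum : 1 / ((1 - x) ^ 2 * (1 - w - x)) = 1 / (1 - x) ^ 3 * (1 - w / (1 - x))⁻¹ := by
    rw [one_sub_div hx.ne', inv_div, sub_right_comm]
    field_simp
  rw [hterm, hsum]
  exact (hasSum_geometric_of_norm_lt_one hratio).mul_left _

theorem norm_coeff (qi : ℕ × ℕ) : ‖coeff x w qi‖ = coeff |x| |w| qi := by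
  simp [coeff]

theorem summable_coeff (hwx : |w| + |x| < 1) : Summable (coeff x w) := by
  have hx : |(|x|)| < 1 := by rw [abs_abs]; linarith [abs_nonneg w]
  have hwx' : |(|w|)| + |(|x|)| < 1 := by rwa [abs_abs, abs_abs]
  have habs : Summable (coeff |x| |w|) := by
    rw [summable_prod_of_nonneg fun qi ↦ by unfold coeff; positivity]
    exact ⟨fun q ↦ (hasSum_coeff_snd hx q).summable,
      (hasSum_pow_div_one_sub_pow hwx').summable.congr fun q ↦
        (hasSum_coeff_snd hx q).tsum_eq.symm⟩
  exact habs.of_norm_bounded fun qi ↦ (norm_coeff qi).le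

theorem hasSum_coeff (hwx : |w| + |x| < 1) :
    HasSum (coeff x w) (1 / ((1 - x) ^ 2 * (1 - w - x))) := by
  have hx : |x| < 1 := by linarith [abs_nonneg w]
  have h := (summable_coeff hwx).hasSum.prod_fiberwise (hasSum_coeff_snd hx)
  rw [(hasSum_pow_div_one_sub_pow hwx).unique h]
  exact (summable_coeff hwx).hasSum

theorem summable_norm_sum_antidiagonal_coeff (hwx : |w| + |x| < 1) :
    Summable fun m ↦ ‖∑ qi ∈ antidiagonal m, coeff x w qi‖ := by
  have hwx' : |(|w|)| + |(|x|)| < 1 := by rwa [abs_abs, abs_abs]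
  refine (hasSum_coeff hwx').sum_antidiagonal.summable.of_nonneg_of_le (fun m ↦ norm_nonneg _)
    fun m ↦ ?_
  exact (norm_sum_le _ _).trans_eq (sum_congr rfl fun qi _ ↦ norm_coeff qi)


theorem sum_range_eq_sum_antidiagonal_coeff (m₂ t ω a : ℝ) (n : ℕ) :
    ∑ p ∈ range (n + 1), ((n - p)! : ℝ) / (n ! * p !) * t ^ p * ω ^ (n - p) *
        ((p ! : ℝ) ^ 2 * n.choose p * m₂ ^ (2 * p) *
          ∑ j ∈ range (p + 1),
            1 / (j ! : ℝ) * a ^ j * ((n - j + 2).choose (n - p + 2) : ℝ)) =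
      ∑ jm ∈ antidiagonal n, (a * (m₂ ^ 2 * t)) ^ jm.1 / jm.1 ! *
        ∑ qi ∈ antidiagonal jm.2, coeff (m₂ ^ 2 * t) ω qi := by
  simp_rw [mul_sum]
  rw [← sum_range_sum_range_eq_sum_antidiagonal_sum_antidiagonal n
    fun j q i ↦ (a * (m₂ ^ 2 * t)) ^ j / j ! * coeff (m₂ ^ 2 * t) ω (q, i)]
  refine sum_congr rfl fun p hp ↦ sum_congr rfl fun j hj ↦ ?_
  rw [mem_range, Nat.lt_succ_iff] at hp hj
  obtain ⟨i, rfl⟩ := Nat.exists_eq_add_of_le hj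
  have hc := sub_factorial_div_mul_sq_factorial_mul_choose hp
  rw [coeff, Nat.add_sub_cancel_left, show n - (j + i) + i + 2 = n - j + 2 by omega]
  rw [pow_mul, pow_add, pow_add, mul_pow, mul_pow, mul_pow]
  linear_combination (1 / (j ! : ℝ) * a ^ j * ((n - j + 2).choose (n - (j + i) + 2) : ℝ) *
    (m₂ ^ 2) ^ j * (m₂ ^ 2) ^ i * t ^ j * t ^ i * ω ^ (n - (j + i))) * hc

end Dembo

theorem dembo_generating_function_general
    (m₂ m₄ t ω : ℝ) (hm₂ : 0 < m₂)
    (hw : |ω| + m₂ ^ 2 * |t| < 1) :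
    (∑' n : ℕ, ∑ p ∈ Finset.range (n + 1),
        (((n - p)! : ℝ) / ((n ! : ℝ) * (p ! : ℝ))) * t ^ p * ω ^ (n - p) *
          ((p ! : ℝ) ^ 2 * (n.choose p : ℝ) * m₂ ^ (2 * p) *
            ∑ j ∈ Finset.range (p + 1),
              (1 / (j ! : ℝ)) * (m₄ / m₂ ^ 2 - 3) ^ j *
                ((n - j + 2).choose (n - p + 2) : ℝ))) =
      Real.exp (t * (m₄ - 3 * m₂ ^ 2)) /
        ((1 - m₂ ^ 2 * t) ^ 2 * (1 - ω - m₂ ^ 2 * t)) := by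
  have hx : |ω| + |m₂ ^ 2 * t| < 1 := by rwa [abs_mul, abs_of_nonneg (sq_nonneg m₂)]
  have hy : (m₄ / m₂ ^ 2 - 3) * (m₂ ^ 2 * t) = t * (m₄ - 3 * m₂ ^ 2) := by
    field_simp
  set y := t * (m₄ - 3 * m₂ ^ 2)
  have hexp_norm : Summable fun j : ℕ ↦ ‖y ^ j / (j ! : ℝ)‖ :=
    NormedSpace.norm_expSeries_div_summable y
  have hexp : HasSum (fun j : ℕ ↦ y ^ j / (j ! : ℝ)) (Real.exp y) := by
    rw [Real.exp_eq_exp_ℝ]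
    exact NormedSpace.expSeries_div_hasSum_exp y
  rw [tsum_congr (Dembo.sum_range_eq_sum_antidiagonal_coeff m₂ t ω _)]
  simp only [hy]
  rw [← tsum_mul_tsum_eq_tsum_sum_antidiagonal_of_summable_norm hexp_norm
      (Dembo.summable_norm_sum_antidiagonal_coeff hx), hexp.tsum_eq,
    (Dembo.hasSum_coeff hx).sum_antidiagonal.tsum_eq, mul_one_div]

/-- Dembo's generating function identity for the second moment of a random Gram
determinant with symmetric entries:
`∑ₙ ∑ₚ ((n-p)!/(n!p!)) tᵖ ωⁿ⁻ᵖ f(n,p) = e^{t(m₄-3m₂²)}/((1-m₂²t)²(1-ω-m₂²t))`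
where `f(n,p) = p!² C(n,p) m₂^{2p} ∑ⱼ (1/j!)(m₄/m₂²-3)ʲ C(n-j+2, n-p+2)`. -/
theorem dembo_generating_function
    (m₂ m₄ t ω : ℝ) (hm₂ : 0 < m₂)
    (ht : m₂ ^ 2 * |t| < 1) (hw : |ω| + m₂ ^ 2 * |t| < 1) :
    (∑' n : ℕ, ∑ p ∈ Finset.range (n + 1),
        (((n - p)! : ℝ) / ((n ! : ℝ) * (p ! : ℝ))) * t ^ p * ω ^ (n - p) *
          ((p ! : ℝ) ^ 2 * (n.choose p : ℝ) * m₂ ^ (2 * p) *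
            ∑ j ∈ Finset.range (p + 1),
              (1 / (j ! : ℝ)) * (m₄ / m₂ ^ 2 - 3) ^ j *
                ((n - j + 2).choose (n - p + 2) : ℝ))) =
      Real.exp (t * (m₄ - 3 * m₂ ^ 2)) /
        ((1 - m₂ ^ 2 * t) ^ 2 * (1 - ω - m₂ ^ 2 * t)) :=
  dembo_generating_function_general m₂ m₄ t ω hm₂ hw
end
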